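/- arXiv:2605.23548 — 12 statements merged into one kernel-verified Lean document; each statement's English description precedes it below -/
import Mathlib

section
/- Let E, F, D, f₀ be as in the setup. Then Fintype.card F ≤ Fintype.card E + 1, and the number of Pfaffian orientations relative to f₀, i.e. the cardinality of the set {y : E → ZMod 2 | y is a Pfaffian orientation relative to f₀}, equals 2^(Fintype.card E + 1 - Fintype.card F). (For a closed orientable cellulated surface of genus g with v vertices this exponent equals v - 1 + 2g by Euler's formula.) -/
open Matrix


/-- The number of Pfaffian orientations on a punctured, connected, closed, orientable
cellulated surface (encoded by its face–edge incidence matrix `D`) with puncture `f₀`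
is `2 ^ (|E| + 1 - |F|)`. -/
theorem pfaffian_orientation_count
    (E F : Type*) [Fintype E] [Fintype F] [DecidableEq E] [DecidableEq F]
    (D : Matrix E F ℤ)
    (hD : ∀ e : E, ∃ f g : F, f ≠ g ∧ D e f = 1 ∧ D e g = -1 ∧
      ∀ h : F, h ≠ f → h ≠ g → D e h = 0)
    (hconn : (SimpleGraph.fromRel (fun f g : F => ∃ e : E, D e f ≠ 0 ∧ D e g ≠ 0)).Connected)
    (f₀ : F) :
    Fintype.card F ≤ Fintype.card E + 1 ∧
    Nat.card {y : E → ZMod 2 | ∀ f : F, f ≠ f₀ →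
        ∑ e ∈ Finset.univ.filter (fun e : E => D e f ≠ 0),
          ((if D e f = -1 then (1 : ZMod 2) else 0) + y e) = 1} =
      2 ^ (Fintype.card E + 1 - Fintype.card F) := by
  classical
  set A : Matrix {f : F // f ≠ f₀} E (ZMod 2) :=
    fun f e => if D e f.1 = 0 then 0 else 1 with hA
  -- injectivity of the transpose
  have key : ∀ c : {f : F // f ≠ f₀} → ZMod 2, Aᵀ.mulVecLin c = 0 → c = 0 := by
    intro c hc
    set c' : F → ZMod 2 := fun f => if h : f = f₀ then 0 else c ⟨f, h⟩ with hc'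
    have hsum : ∀ e : E, ∑ f : F, (if D e f = 0 then 0 else c' f) = 0 := by
      intro e
      have h1 : (Aᵀ.mulVecLin c) e = 0 := by rw [hc]; rfl
      rw [Matrix.mulVecLin_apply, Matrix.mulVec, dotProduct] at h1
      have h2 : ∑ x : {f : F // f ≠ f₀}, Aᵀ e x * c x
          = ∑ f ∈ Finset.univ.filter (fun f : F => f ≠ f₀),
              (if D e f = 0 then 0 else c' f) := by
        rw [Finset.sum_subtype (p := fun f : F => f ≠ f₀)
          (Finset.univ.filter (fun f : F => f ≠ f₀))
          (by simp) (fun f => if D e f = 0 then 0 else c' f)]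
        apply Finset.sum_congr rfl
        intro x _
        simp only [hA, Matrix.transpose_apply, hc', dif_neg x.2]
        by_cases h : D e x.1 = 0 <;> simp [h, Matrix.transpose, Matrix.of_apply]
      have h3 : ∑ f ∈ Finset.univ.filter (fun f : F => f ≠ f₀),
            (if D e f = 0 then 0 else c' f)
          = ∑ f : F, (if D e f = 0 then 0 else c' f) :=
        Finset.sum_filter_of_ne (fun f _ hf hff => hf (by subst hff; simp [hc']))
      rw [← h3, ← h2, h1]
    have hadj : ∀ f g : F, (∃ e : E, D e f ≠ 0 ∧ D e g ≠ 0) → f ≠ g → c' f = c' g := by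
      rintro f g ⟨e, hf, hg⟩ hfg
      obtain ⟨f', g', hne, h1, h2, h0⟩ := hD e
      have hmem : ∀ h : F, D e h ≠ 0 → h = f' ∨ h = g' := by
        intro h hh
        by_contra hcon
        push_neg at hcon
        exact hh (h0 h hcon.1 hcon.2)
      have hsum2 : ∑ f : F, (if D e f = 0 then 0 else c' f) = c' f' + c' g' := by
        rw [Finset.sum_eq_add_of_mem f' g' (Finset.mem_univ _) (Finset.mem_univ _) hne]
        · rw [if_neg (by rw [h1]; norm_num), if_neg (by rw [h2]; norm_num)]
        · intro h _ ⟨hhf, hhg⟩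
          rw [if_pos (h0 h hhf hhg)]
      have hzero : c' f' + c' g' = 0 := by rw [← hsum2, hsum e]
      have heq : c' f' = c' g' := by
        have := neg_eq_of_add_eq_zero_left hzero
        rw [← this, ZMod.neg_eq_self_mod_two]
      rcases hmem f hf with rfl | rfl <;> rcases hmem g hg with rfl | rfl
      · exact absurd rfl hfg
      · exact heq
      · exact heq.symm
      · exact absurd rfl hfg
    have hwalk : ∀ (u v : F),
        (SimpleGraph.fromRel (fun f g : F => ∃ e : E, D e f ≠ 0 ∧ D e g ≠ 0)).Walk u v →
        c' u = c' v := by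
      intro u v w
      induction w with
      | nil => rfl
      | cons h p ih =>
        rw [SimpleGraph.fromRel_adj] at h
        obtain ⟨hne, h | h⟩ := h
        · exact (hadj _ _ h hne).trans ih
        · exact ((hadj _ _ h hne.symm).symm).trans ih
    have hall : ∀ f : F, c' f = c' f₀ := by
      intro f
      obtain ⟨w⟩ := hconn.preconnected f f₀
      exact hwalk f f₀ w
    funext x
    have := hall x.1
    rw [hc'] at this
    simp only [dif_neg x.2] at this
    simpa [hc'] using this
  have hinj : Function.Injective Aᵀ.mulVecLin := by
    rw [← LinearMap.ker_eq_bot, eq_bot_iff]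
    intro c hcm
    exact key c (LinearMap.mem_ker.mp hcm)
  have hcardFs : Fintype.card {f : F // f ≠ f₀} = Fintype.card F - 1 := by
    simp only [ne_eq]
    rw [Fintype.card_subtype_compl, Fintype.card_subtype_eq]
  have hrT : Aᵀ.rank = Fintype.card F - 1 := by
    rw [Matrix.rank, LinearMap.finrank_range_of_inj hinj, Module.finrank_pi, hcardFs]
  have hle : Fintype.card F - 1 ≤ Fintype.card E := by
    rw [← hrT]; exact Aᵀ.rank_le_card_height
  have hF1 : 1 ≤ Fintype.card F := Fintype.card_pos_iff.mpr ⟨f₀⟩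
  refine ⟨by omega, ?_⟩
  -- surjectivity of A.mulVecLin
  have hsurj : Function.Surjective A.mulVecLin := by
    rw [← LinearMap.range_eq_top]
    apply Submodule.eq_top_of_finrank_eq
    rw [show Module.finrank (ZMod 2) ↥(LinearMap.range A.mulVecLin) = A.rank from rfl,
      ← Matrix.rank_transpose, hrT, Module.finrank_pi, hcardFs]
  -- rank-nullity for the kernel
  have hker : Module.finrank (ZMod 2) (LinearMap.ker A.mulVecLin)
      = Fintype.card E + 1 - Fintype.card F := by
    have h := LinearMap.finrank_range_add_finrank_ker A.mulVecLin
    rw [show Module.finrank (ZMod 2) ↥(LinearMap.range A.mulVecLin) = A.rank from rfl,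
      ← Matrix.rank_transpose, hrT, Module.finrank_pi] at h
    omega
  -- identify the solution set
  set b : {f : F // f ≠ f₀} → ZMod 2 :=
    fun f => 1 + ∑ e ∈ Finset.univ.filter (fun e : E => D e f.1 ≠ 0),
      (if D e f.1 = -1 then (1 : ZMod 2) else 0) with hb
  have hset : ∀ y : E → ZMod 2,
      (∀ f : F, f ≠ f₀ →
        ∑ e ∈ Finset.univ.filter (fun e : E => D e f ≠ 0),
          ((if D e f = -1 then (1 : ZMod 2) else 0) + y e) = 1)
      ↔ A.mulVecLin y = b := by
    intro y
    rw [funext_iff]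
    constructor
    · intro h x
      have h1 := h x.1 x.2
      rw [Finset.sum_add_distrib] at h1
      rw [Matrix.mulVecLin_apply, Matrix.mulVec, dotProduct]
      have h2 : ∑ e : E, A x e * y e
          = ∑ e ∈ Finset.univ.filter (fun e : E => D e x.1 ≠ 0), y e := by
        rw [Finset.sum_filter]
        apply Finset.sum_congr rfl
        intro e _
        by_cases hde : D e x.1 = 0 <;> simp [hA, hde]
      rw [h2, hb]
      have h3 : ∑ e ∈ Finset.univ.filter (fun e : E => D e x.1 ≠ 0), y e
          = 1 + ∑ e ∈ Finset.univ.filter (fun e : E => D e x.1 ≠ 0),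
              (if D e x.1 = -1 then (1 : ZMod 2) else 0) := by
        have h4 := h1
        set s := ∑ e ∈ Finset.univ.filter (fun e : E => D e x.1 ≠ 0),
          (if D e x.1 = -1 then (1 : ZMod 2) else 0)
        set t := ∑ e ∈ Finset.univ.filter (fun e : E => D e x.1 ≠ 0), y e
        have : s + s = 0 := by rw [← two_mul, show (2 : ZMod 2) = 0 by decide, zero_mul]
        calc t = s + s + t := by rw [this]; ring
        _ = s + (s + t) := by ring
        _ = s + 1 := by rw [h4]
        _ = 1 + s := by ring
      exact h3
    · intro h f hf
      have h1 := h ⟨f, hf⟩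
      rw [Matrix.mulVecLin_apply, Matrix.mulVec, dotProduct] at h1
      have h2 : ∑ e : E, A ⟨f, hf⟩ e * y e
          = ∑ e ∈ Finset.univ.filter (fun e : E => D e f ≠ 0), y e := by
        rw [Finset.sum_filter]
        apply Finset.sum_congr rfl
        intro e _
        by_cases hde : D e f = 0 <;> simp [hA, hde]
      rw [h2, hb] at h1
      rw [Finset.sum_add_distrib, h1]
      set s := ∑ e ∈ Finset.univ.filter (fun e : E => D e f ≠ 0),
        (if D e f = -1 then (1 : ZMod 2) else 0)
      have : s + s = 0 := by rw [← two_mul, show (2 : ZMod 2) = 0 by decide, zero_mul]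
      calc s + (1 + s) = s + s + 1 := by ring
      _ = 1 := by rw [this]; ring
  obtain ⟨y₀, hy₀⟩ := hsurj b
  -- bijection between solution set and kernel
  have hequiv : {y : E → ZMod 2 | ∀ f : F, f ≠ f₀ →
        ∑ e ∈ Finset.univ.filter (fun e : E => D e f ≠ 0),
          ((if D e f = -1 then (1 : ZMod 2) else 0) + y e) = 1}
      ≃ LinearMap.ker A.mulVecLin := by
    refine ⟨fun y => ⟨y.1 - y₀, ?_⟩, fun z => ⟨z.1 + y₀, ?_⟩, ?_, ?_⟩
    · rw [LinearMap.mem_ker, map_sub, (hset y.1).mp y.2, hy₀, sub_self]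
    · have hz := LinearMap.mem_ker.mp z.2
      rw [Set.mem_setOf_eq, hset, map_add, hz, hy₀, zero_add]
    · intro y; ext : 1; simp
    · intro z; ext : 1; simp
  rw [Nat.card_congr hequiv, ← hker]
  have : Nat.card (LinearMap.ker A.mulVecLin)
      = Fintype.card (ZMod 2) ^ Module.finrank (ZMod 2) (LinearMap.ker A.mulVecLin) := by
    rw [Nat.card_eq_fintype_card]
    exact Module.card_eq_pow_finrank
  rw [this, ZMod.card]
end

section
/- Let E, F, D, f₀ be as in the setup, and let v, g be natural numbers with v ≥ 1 such that (v : ℤ) - Fintype.card E + Fintype.card F = 2 - 2 * g (the Euler characteristic relation for a closed orientable surface of genus g with v vertices). Then the number of Pfaffian orientations relative to f₀, i.e. the cardinality of {y : E → ZMod 2 | y is a Pfaffian orientation relative to f₀}, equals 2^(v - 1 + 2 * g). -/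
set_option maxHeartbeats 1000000

/-- Main theorem: on a punctured, connected, closed, orientable cellulated surface of
genus `g` with `v` vertices (so that `v - d + p = 2 - 2g` by Euler's formula), the
number of Pfaffian orientations is `2 ^ (v - 1 + 2g)`. -/
theorem pfaffian_orientation_count_genus
    (E F : Type*) [Fintype E] [Fintype F] [DecidableEq E] [DecidableEq F]
    (D : Matrix E F ℤ)
    (hD : ∀ e : E, ∃ f g : F, f ≠ g ∧ D e f = 1 ∧ D e g = -1 ∧
      ∀ h : F, h ≠ f → h ≠ g → D e h = 0)
    (hconn : (SimpleGraph.fromRel (fun f g : F => ∃ e : E, D e f ≠ 0 ∧ D e g ≠ 0)).Connected)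
    (f₀ : F) (v g : ℕ) (hv : 1 ≤ v)
    (hEuler : (v : ℤ) - Fintype.card E + Fintype.card F = 2 - 2 * g) :
    Nat.card {y : E → ZMod 2 | ∀ f : F, f ≠ f₀ →
        ∑ e ∈ Finset.univ.filter (fun e : E => D e f ≠ 0),
          ((if D e f = -1 then (1 : ZMod 2) else 0) + y e) = 1} =
      2 ^ (v - 1 + 2 * g) := by
  classical
  haveI : Fact (Nat.Prime 2) := ⟨by norm_num⟩
  -- the edge lemma
  have edge : ∀ (e : E) (f g' : F), D e f ≠ 0 → D e g' ≠ 0 → f ≠ g' →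
      ∀ h : F, (D e h ≠ 0 ↔ (h = f ∨ h = g')) := by
    intro e f g' hf hg' hne h
    obtain ⟨a, b, hab, ha, hb, h0⟩ := hD e
    have hfm : f = a ∨ f = b := by
      by_contra hc
      push_neg at hc
      exact hf (h0 f hc.1 hc.2)
    have hgm : g' = a ∨ g' = b := by
      by_contra hc
      push_neg at hc
      exact hg' (h0 g' hc.1 hc.2)
    constructor
    · intro hh
      have hhm : h = a ∨ h = b := by
        by_contra hc
        push_neg at hc
        exact hh (h0 h hc.1 hc.2)
      rcases hfm with rfl | rfl <;> rcases hgm with rfl | rfl <;> tauto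
    · rintro (rfl | rfl)
      · exact hf
      · exact hg'
  set G := SimpleGraph.fromRel (fun f g : F => ∃ e : E, D e f ≠ 0 ∧ D e g ≠ 0) with hG
  -- step 2 : reachability gives indicator pairs in the "range"
  have step2 : ∀ f g' : F, G.Reachable f g' → ∃ y : E → ZMod 2, ∀ h : F,
      ∑ e ∈ Finset.univ.filter (fun e : E => D e h ≠ 0), y e
        = (if h = f then 1 else 0) + (if h = g' then 1 else 0) := by
    intro f g' hr
    obtain ⟨w⟩ := hr
    induction w with
    | nil =>
      refine ⟨0, fun h => ?_⟩
      simp [CharTwo.add_self_eq_zero]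
    | @cons f c g' ha p ih =>
      obtain ⟨y1, hy1⟩ := ih
      rw [SimpleGraph.fromRel_adj] at ha
      obtain ⟨hne, he⟩ := ha
      have hee : ∃ e : E, D e f ≠ 0 ∧ D e c ≠ 0 := by
        rcases he with ⟨e, h1, h2⟩ | ⟨e, h1, h2⟩
        · exact ⟨e, h1, h2⟩
        · exact ⟨e, h2, h1⟩
      obtain ⟨e, hef, hec⟩ := hee
      have hiff := edge e f c hef hec hne
      refine ⟨y1 + fun e' => if e' = e then 1 else 0, fun h => ?_⟩
      have h1 : ∑ e' ∈ Finset.univ.filter (fun e' : E => D e' h ≠ 0),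
          (y1 e' + if e' = e then (1 : ZMod 2) else 0)
          = (∑ e' ∈ Finset.univ.filter (fun e' : E => D e' h ≠ 0), y1 e')
            + if D e h ≠ 0 then 1 else 0 := by
        rw [Finset.sum_add_distrib, Finset.sum_ite_eq' _ e (fun _ => (1 : ZMod 2))]
        simp
      calc ∑ e' ∈ Finset.univ.filter (fun e' : E => D e' h ≠ 0),
            (y1 + fun e' => if e' = e then (1:ZMod 2) else 0) e'
          = (∑ e' ∈ Finset.univ.filter (fun e' : E => D e' h ≠ 0), y1 e')
            + if D e h ≠ 0 then 1 else 0 := h1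
        _ = ((if h = c then 1 else 0) + (if h = g' then 1 else 0))
            + if h = f ∨ h = c then 1 else 0 := by rw [hy1 h]; simp only [hiff h]
        _ = (if h = f then 1 else 0) + (if h = g' then 1 else 0) := by
            by_cases h2 : h = f
            · by_cases h3 : h = c
              · exact absurd (h2.symm.trans h3) hne
              · by_cases h4 : h = g' <;> simp_all <;> rfl
            · by_cases h3 : h = c
              · by_cases h4 : h = g' <;> simp_all <;> rfl
              · by_cases h4 : h = g' <;> simp_all <;> rfl
  -- the linear map
  let L : (E → ZMod 2) →ₗ[ZMod 2] ({f : F // f ≠ f₀} → ZMod 2) :=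
    { toFun := fun y s => ∑ e ∈ Finset.univ.filter (fun e : E => D e s.1 ≠ 0), y e
      map_add' := by intro y z; funext s; simp [Finset.sum_add_distrib]
      map_smul' := by intro c y; funext s; simp [Finset.mul_sum] }
  have hsingle : ∀ s : {f : F // f ≠ f₀}, Pi.single s (1 : ZMod 2) ∈ LinearMap.range L := by
    intro s
    obtain ⟨y, hy⟩ := step2 s.1 f₀ (hconn.preconnected s.1 f₀)
    refine ⟨y, ?_⟩
    funext u
    show (∑ e ∈ Finset.univ.filter (fun e : E => D e u.1 ≠ 0), y e) = _
    rw [hy u.1]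
    have hu : ¬ u.1 = f₀ := u.2
    by_cases h2 : u = s
    · subst h2; simp [hu, Pi.single_apply]
    · have : ¬ u.1 = s.1 := fun hc => h2 (Subtype.ext hc)
      simp [hu, this, Pi.single_apply, h2]
  have hrange : LinearMap.range L = ⊤ := by
    rw [eq_top_iff]
    intro t _
    have ht : t = ∑ s, Pi.single s (t s) := (Finset.univ_sum_single t).symm
    rw [ht]
    refine Submodule.sum_mem _ fun s _ => ?_
    have h5 : Pi.single s (t s) = t s • (Pi.single s (1 : ZMod 2) : {f : F // f ≠ f₀} → ZMod 2) := by
      funext u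
      by_cases h : u = s <;> simp [h, Pi.single_apply]
    rw [h5]
    exact Submodule.smul_mem _ _ (hsingle s)
  have hsurj : Function.Surjective L := LinearMap.range_eq_top.mp hrange
  -- rank-nullity
  have hrn := LinearMap.finrank_range_add_finrank_ker L
  rw [hrange, finrank_top, Module.finrank_fintype_fun_eq_card,
    Module.finrank_fintype_fun_eq_card] at hrn
  have hcardS : Fintype.card {f : F // f ≠ f₀} = Fintype.card F - 1 := by
    simp [Fintype.card_subtype_compl, Fintype.card_subtype_eq]
  -- b and the set equality
  set b : {f : F // f ≠ f₀} → ZMod 2 := fun s =>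
    1 + ∑ e ∈ Finset.univ.filter (fun e : E => D e s.1 ≠ 0),
      (if D e s.1 = -1 then (1 : ZMod 2) else 0) with hb
  have hset : {y : E → ZMod 2 | ∀ f : F, f ≠ f₀ →
      ∑ e ∈ Finset.univ.filter (fun e : E => D e f ≠ 0),
        ((if D e f = -1 then (1 : ZMod 2) else 0) + y e) = 1}
      = {y : E → ZMod 2 | L y = b} := by
    ext y
    simp only [Set.mem_setOf_eq]
    have key : ∀ f : F, (hf : f ≠ f₀) →
        ((∑ e ∈ Finset.univ.filter (fun e : E => D e f ≠ 0),
          ((if D e f = -1 then (1 : ZMod 2) else 0) + y e) = 1)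
        ↔ L y ⟨f, hf⟩ = b ⟨f, hf⟩) := by
      intro f hf
      show _ ↔ (∑ e ∈ Finset.univ.filter (fun e : E => D e f ≠ 0), y e) = _
      rw [Finset.sum_add_distrib, hb]
      simp only
      rw [add_comm, ← eq_sub_iff_add_eq, CharTwo.sub_eq_add, add_comm (1 : ZMod 2)]
    constructor
    · intro hy
      funext s
      exact (key s.1 s.2).mp (hy s.1 s.2)
    · intro hy f hf
      exact (key f hf).mpr (congrFun hy ⟨f, hf⟩)
  obtain ⟨y₀, hy₀⟩ := hsurj b
  have hequiv : {y : E → ZMod 2 // L y = b} ≃ LinearMap.ker L :=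
    { toFun := fun y => ⟨y.1 - y₀, by
        rw [LinearMap.mem_ker, map_sub, y.2, hy₀, sub_self]⟩
      invFun := fun z => ⟨y₀ + z.1, by
        rw [map_add, hy₀, LinearMap.mem_ker.mp z.2, add_zero]⟩
      left_inv := fun y => by ext1; simp
      right_inv := fun z => by ext1; simp }
  rw [hset]
  have : Nat.card {y : E → ZMod 2 | L y = b} = Nat.card (LinearMap.ker L) :=
    Nat.card_congr hequiv
  rw [this]
  have hker : Nat.card (LinearMap.ker L) = 2 ^ Module.finrank (ZMod 2) (LinearMap.ker L) := by
    haveI : Fintype (LinearMap.ker L) := Fintype.ofFinite _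
    rw [Nat.card_eq_fintype_card]
    have := Module.card_eq_pow_finrank (K := ZMod 2) (V := LinearMap.ker L)
    rwa [ZMod.card] at this
  rw [hker]
  congr 1
  -- arithmetic
  have hF1 : 1 ≤ Fintype.card F := Fintype.card_pos_iff.mpr ⟨f₀⟩
  rw [hcardS] at hrn
  omega
end

section
/- Let E, F, D, f₀ be as in the setup, and let v be a natural number with v ≥ 1 such that (v : ℤ) - Fintype.card E + Fintype.card F = 2 (the Euler relation for a cellulated 2-sphere with v vertices, genus 0). Then the number of Pfaffian orientations relative to f₀, i.e. the cardinality of {y : E → ZMod 2 | y is a Pfaffian orientation relative to f₀}, equals 2^(v - 1). (This is the count of Pfaffian orientations on a planar graph, viewed as a punctured cellulated 2-sphere.) -/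
private lemma walk_const {F : Type*} (G : SimpleGraph F) (c : F → ZMod 2)
    (h : ∀ f g, G.Adj f g → c f = c g) {f g : F} (w : G.Walk f g) : c f = c g := by
  induction w with
  | nil => rfl
  | cons ha _ ih => exact (h _ _ ha).trans ih

private lemma zmod2_add_eq (a b : ZMod 2) (h : a + b = 0) : a = b := by
  revert h; revert a b; decide

/-- Corollary: the number of Pfaffian orientations on a punctured cellulated 2-sphere
with `v` vertices (equivalently, on a planar graph) is `2 ^ (v - 1)`. -/
theorem pfaffian_orientation_count_sphere
    (E F : Type*) [Fintype E] [Fintype F] [DecidableEq E] [DecidableEq F]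
    (D : Matrix E F ℤ)
    (hD : ∀ e : E, ∃ f g : F, f ≠ g ∧ D e f = 1 ∧ D e g = -1 ∧
      ∀ h : F, h ≠ f → h ≠ g → D e h = 0)
    (hconn : (SimpleGraph.fromRel (fun f g : F => ∃ e : E, D e f ≠ 0 ∧ D e g ≠ 0)).Connected)
    (f₀ : F) (v : ℕ) (hv : 1 ≤ v)
    (hEuler : (v : ℤ) - Fintype.card E + Fintype.card F = 2) :
    Nat.card {y : E → ZMod 2 | ∀ f : F, f ≠ f₀ →
        ∑ e ∈ Finset.univ.filter (fun e : E => D e f ≠ 0),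
          ((if D e f = -1 then (1 : ZMod 2) else 0) + y e) = 1} =
      2 ^ (v - 1) := by
  classical
  -- the linear map
  let L : (E → ZMod 2) →ₗ[ZMod 2] ({f : F // f ≠ f₀} → ZMod 2) :=
    { toFun := fun y f => ∑ e ∈ Finset.univ.filter (fun e : E => D e f.1 ≠ 0), y e
      map_add' := by intro x y; funext f; simp [Finset.sum_add_distrib]
      map_smul' := by intro m x; funext f; simp [Finset.mul_sum] }
  -- each edge has exactly two faces: filter description
  have hfilter : ∀ e : E, ∃ f g : F, f ≠ g ∧
      (Finset.univ.filter (fun h : F => D e h ≠ 0)) = {f, g} := by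
    intro e
    obtain ⟨f, g, hfg, h1, h2, h0⟩ := hD e
    refine ⟨f, g, hfg, ?_⟩
    ext h
    simp only [Finset.mem_filter, Finset.mem_univ, true_and, Finset.mem_insert,
      Finset.mem_singleton]
    constructor
    · intro hne
      by_contra hc
      push_neg at hc
      exact hne (h0 h hc.1 hc.2)
    · rintro (rfl | rfl) <;> simp [h1, h2]
  -- surjectivity of L
  have hsurj : Function.Surjective L := by
    rw [← LinearMap.range_eq_top]
    by_contra hne
    obtain ⟨φ, hφne, hφ⟩ := Submodule.exists_dual_map_eq_bot_of_lt_top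
      (lt_top_iff_ne_top.mpr hne) inferInstance
    -- extended coefficient function
    set c : F → ZMod 2 := fun f =>
      if h : f = f₀ then 0 else φ (fun j => if (⟨f, h⟩ : {f : F // f ≠ f₀}) = j then 1 else 0)
      with hc
    have hc0 : c f₀ = 0 := by simp [hc]
    have hcval : ∀ (f : F) (hf : f ≠ f₀),
        c f = φ (fun j => if (⟨f, hf⟩ : {f : F // f ≠ f₀}) = j then 1 else 0) := by
      intro f hf; simp [hc, dif_neg hf]
    -- φ vanishes on range L
    have hφ0 : ∀ y, φ (L y) = 0 := by
      intro y
      have h1 : L y ∈ LinearMap.range L := ⟨y, rfl⟩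
      have h2 := Submodule.mem_map_of_mem (f := φ) h1
      rw [hφ] at h2
      exact (Submodule.mem_bot _).mp h2
    -- key edge relation: sum over full F
    have hedge : ∀ e : E, ∑ f ∈ Finset.univ.filter (fun h : F => D e h ≠ 0), c f = 0 := by
      intro e
      have h1 := hφ0 (fun e' => if e = e' then 1 else 0)
      rw [LinearMap.pi_apply_eq_sum_univ] at h1
      have h2 : ∀ f : {f : F // f ≠ f₀},
          L (fun e' => if e = e' then 1 else 0) f = if D e f.1 ≠ 0 then 1 else 0 := by
        intro f
        show (∑ e' ∈ Finset.univ.filter (fun e' : E => D e' f.1 ≠ 0),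
          if e = e' then (1 : ZMod 2) else 0) = _
        rw [Finset.sum_ite_eq]
        simp
      simp only [h2] at h1
      refine Eq.trans ?_ h1
      calc ∑ f ∈ Finset.univ.filter (fun h : F => D e h ≠ 0), c f
          = ∑ f : F, if D e f ≠ 0 then c f else 0 := Finset.sum_filter _ _
        _ = ∑ f ∈ Finset.univ.erase f₀, if D e f ≠ 0 then c f else 0 := by
            rw [Finset.sum_erase_eq_sub (Finset.mem_univ f₀)]
            simp [hc0]
        _ = ∑ f : {f : F // f ≠ f₀}, if D e f.1 ≠ 0 then c f.1 else 0 := by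
            refine Finset.sum_subtype _ (fun x => ?_) _
            simp
        _ = ∑ f : {f : F // f ≠ f₀}, (if D e f.1 ≠ 0 then (1 : ZMod 2) else 0) •
              (φ fun j => if f = j then 1 else 0) := by
            refine Finset.sum_congr rfl fun f _ => ?_
            rcases f with ⟨f, hf⟩
            by_cases hd : D e f ≠ 0 <;> simp [hd, hcval f hf]
    -- c is constant across edges of the face-adjacency graph
    have hadj : ∀ f g, (SimpleGraph.fromRel
        (fun f g : F => ∃ e : E, D e f ≠ 0 ∧ D e g ≠ 0)).Adj f g → c f = c g := by
      intro f g hfg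
      obtain ⟨hne', hrel⟩ := hfg
      have hrel' : ∃ e : E, D e f ≠ 0 ∧ D e g ≠ 0 := by
        rcases hrel with h | h
        · exact h
        · obtain ⟨e, h1, h2⟩ := h; exact ⟨e, h2, h1⟩
      obtain ⟨e, hf1, hg1⟩ := hrel'
      obtain ⟨f', g', hfg', hfe⟩ := hfilter e
      have hsum : c f' + c g' = 0 := by
        have := hedge e
        rwa [hfe, Finset.sum_pair hfg'] at this
      have hfm : f = f' ∨ f = g' := by
        have : f ∈ Finset.univ.filter (fun h : F => D e h ≠ 0) := by
          simp [hf1]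
        rw [hfe] at this; simpa using this
      have hgm : g = f' ∨ g = g' := by
        have : g ∈ Finset.univ.filter (fun h : F => D e h ≠ 0) := by
          simp [hg1]
        rw [hfe] at this; simpa using this
      rcases hfm with rfl | rfl <;> rcases hgm with rfl | rfl
      · exact absurd rfl hne'
      · exact zmod2_add_eq _ _ hsum
      · exact zmod2_add_eq _ _ ((add_comm (c g) (c f)) ▸ hsum)
      · exact absurd rfl hne'
    -- c vanishes everywhere by connectivity
    have hcz : ∀ f : F, c f = 0 := by
      intro f
      obtain ⟨w⟩ := hconn.preconnected f f₀
      rw [walk_const _ c hadj w, hc0]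
    -- hence φ = 0, contradiction
    refine hφne (LinearMap.ext fun x => ?_)
    rw [LinearMap.zero_apply, LinearMap.pi_apply_eq_sum_univ]
    refine Finset.sum_eq_zero fun i _ => ?_
    rcases i with ⟨f, hf⟩
    rw [← hcval f hf, hcz f, smul_zero]
  -- rewrite the solution set as a fiber of L
  set t : {f : F // f ≠ f₀} → ZMod 2 := fun f =>
    1 + ∑ e ∈ Finset.univ.filter (fun e : E => D e f.1 ≠ 0),
      (if D e f.1 = -1 then (1 : ZMod 2) else 0) with ht
  have h2z : ∀ s : ZMod 2, s + s = 0 := by decide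
  have hSet : {y : E → ZMod 2 | ∀ f : F, f ≠ f₀ →
      ∑ e ∈ Finset.univ.filter (fun e : E => D e f ≠ 0),
        ((if D e f = -1 then (1 : ZMod 2) else 0) + y e) = 1} = {y | L y = t} := by
    ext y
    simp only [Set.mem_setOf_eq]
    constructor
    · intro hy
      funext f
      have h1 := hy f.1 f.2
      rw [Finset.sum_add_distrib] at h1
      show (∑ e ∈ Finset.univ.filter (fun e : E => D e f.1 ≠ 0), y e) = t f
      rw [ht]
      set s := ∑ e ∈ Finset.univ.filter (fun e : E => D e f.1 ≠ 0),
        (if D e f.1 = -1 then (1 : ZMod 2) else 0)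
      have : s + (s + ∑ e ∈ Finset.univ.filter (fun e : E => D e f.1 ≠ 0), y e)
          = s + 1 := by rw [← add_assoc, ← h1]; ring
      calc (∑ e ∈ Finset.univ.filter (fun e : E => D e f.1 ≠ 0), y e)
          = s + (s + ∑ e ∈ Finset.univ.filter (fun e : E => D e f.1 ≠ 0), y e) := by
            rw [← add_assoc, h2z, zero_add]
        _ = 1 + s := by rw [this]; ring
    · intro hy f hf
      have h1 : L y ⟨f, hf⟩ = t ⟨f, hf⟩ := by rw [hy]
      rw [Finset.sum_add_distrib]
      set s := ∑ e ∈ Finset.univ.filter (fun e : E => D e f ≠ 0),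
        (if D e f = -1 then (1 : ZMod 2) else 0)
      have h2 : (∑ e ∈ Finset.univ.filter (fun e : E => D e f ≠ 0), y e) = 1 + s := h1
      rw [h2, ← add_assoc, add_comm s 1, add_assoc, h2z, add_zero]
  -- fiber is in bijection with the kernel
  obtain ⟨y₀, hy₀⟩ := hsurj t
  have hbij : {y : E → ZMod 2 | L y = t} ≃ LinearMap.ker L :=
    { toFun := fun y => ⟨y.1 - y₀, by
        rw [LinearMap.mem_ker, map_sub, y.2, hy₀, sub_self]⟩
      invFun := fun z => ⟨z.1 + y₀, by
        have hz := z.2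
        rw [LinearMap.mem_ker] at hz
        show L (z.1 + y₀) = t
        rw [map_add, hz, hy₀, zero_add]⟩
      left_inv := fun y => by ext1; simp
      right_inv := fun z => by ext1; simp }
  rw [hSet, Nat.card_congr hbij]
  -- count the kernel
  have hcard := Submodule.card_eq_card_quotient_mul_card (LinearMap.ker L)
  have hquot : Nat.card ((E → ZMod 2) ⧸ LinearMap.ker L) =
      Nat.card ({f : F // f ≠ f₀} → ZMod 2) :=
    Nat.card_congr (LinearMap.quotKerEquivOfSurjective L hsurj).toEquiv
  rw [hquot] at hcard
  have hdom : Nat.card (E → ZMod 2) = 2 ^ Fintype.card E := by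
    simp [Nat.card_eq_fintype_card]
  have hsub : Fintype.card {f : F // f ≠ f₀} = Fintype.card F - 1 := by
    rw [Fintype.card_subtype_compl]
    simp
  have htar : Nat.card ({f : F // f ≠ f₀} → ZMod 2) = 2 ^ (Fintype.card F - 1) := by
    simp [Nat.card_eq_fintype_card, hsub]
  rw [hdom, htar] at hcard
  have hF1 : 1 ≤ Fintype.card F := Fintype.card_pos_iff.mpr ⟨f₀⟩
  have hE : Fintype.card E = (v - 1) + (Fintype.card F - 1) := by
    have : (v : ℤ) + Fintype.card F = Fintype.card E + 2 := by linarith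
    have h' : v + Fintype.card F = Fintype.card E + 2 := by exact_mod_cast this
    omega
  rw [hE, pow_add] at hcard
  have hpos : 0 < 2 ^ (Fintype.card F - 1) := Nat.pow_pos (by norm_num)
  exact Nat.eq_of_mul_eq_mul_right hpos hcard.symm
end

section
/- Let E, F, D be as in the setup and let f₀ : F. Then the family of punctured column vectors (fun e : E => D e f), indexed by f in the subtype {f : F // f ≠ f₀}, is linearly independent over ℤ. In particular, the incidence matrix of the punctured surface (the matrix D with the column f₀ deleted) has ℤ-linearly independent columns. -/
/-- The columns of the punctured incidence matrix (delete the column of the punctured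
face `f₀`) are linearly independent over `ℤ`. -/
theorem punctured_incidence_columns_linearIndependent
    (E F : Type*) [Fintype E] [Fintype F] [DecidableEq E] [DecidableEq F]
    (D : Matrix E F ℤ)
    (hD : ∀ e : E, ∃ f g : F, f ≠ g ∧ D e f = 1 ∧ D e g = -1 ∧
      ∀ h : F, h ≠ f → h ≠ g → D e h = 0)
    (hconn : (SimpleGraph.fromRel (fun f g : F => ∃ e : E, D e f ≠ 0 ∧ D e g ≠ 0)).Connected)
    (f₀ : F) :
    LinearIndependent ℤ (fun f : {f : F // f ≠ f₀} => fun e : E => D e f.1) := by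
  rw [Fintype.linearIndependent_iff]
  intro c hc i
  set c' : F → ℤ := fun f => if h : f = f₀ then 0 else c ⟨f, h⟩ with hc'def
  have hc'0 : c' f₀ = 0 := by simp [hc'def]
  have hsum : ∀ e : E, ∑ h : F, c' h * D e h = 0 := by
    intro e
    have h1 := congrFun hc e
    simp only [Finset.sum_apply, Pi.smul_apply, smul_eq_mul, Pi.zero_apply] at h1
    have h2 : ∑ h : F, c' h * D e h = ∑ f : {f : F // f ≠ f₀}, c' f.1 * D e f.1 := by
      rw [← Finset.sum_subtype (Finset.univ.erase f₀)
        (fun x => by simp [Finset.mem_erase]) (fun h => c' h * D e h)]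
      rw [Finset.sum_erase _ (by simp [hc'0])]
    rw [h2]
    rw [← h1]
    apply Finset.sum_congr rfl
    intro f _
    simp [hc'def, f.2]
  have key : ∀ a b : F,
      (SimpleGraph.fromRel (fun f g : F => ∃ e : E, D e f ≠ 0 ∧ D e g ≠ 0)).Adj a b →
      c' a = c' b := by
    intro a b hab
    rw [SimpleGraph.fromRel_adj] at hab
    obtain ⟨hne, hr⟩ := hab
    obtain ⟨e, ha, hb⟩ : ∃ e : E, D e a ≠ 0 ∧ D e b ≠ 0 := by
      rcases hr with ⟨e, h1, h2⟩ | ⟨e, h1, h2⟩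
      · exact ⟨e, h1, h2⟩
      · exact ⟨e, h2, h1⟩
    obtain ⟨f, g, hfg, hf1, hg1, h0⟩ := hD e
    have hfgc : c' f = c' g := by
      have hs := hsum e
      rw [Finset.sum_eq_add_of_mem f g (Finset.mem_univ f) (Finset.mem_univ g) hfg
        (fun k _ hk => by rw [h0 k hk.1 hk.2, mul_zero])] at hs
      rw [hf1, hg1] at hs
      linarith
    have haf : a = f ∨ a = g := by
      by_contra h
      push_neg at h
      exact ha (h0 a h.1 h.2)
    have hbf : b = f ∨ b = g := by
      by_contra h
      push_neg at h
      exact hb (h0 b h.1 h.2)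
    rcases haf with rfl | rfl <;> rcases hbf with rfl | rfl
    · exact absurd rfl hne
    · exact hfgc
    · exact hfgc.symm
    · exact absurd rfl hne
  have hwalk : ∀ a b : F,
      (SimpleGraph.fromRel (fun f g : F => ∃ e : E, D e f ≠ 0 ∧ D e g ≠ 0)).Walk a b →
      c' a = c' b := by
    intro a b w
    induction w with
    | nil => rfl
    | cons h p ih => exact (key _ _ h).trans ih
  have hall : ∀ f : F, c' f = c' f₀ := fun f =>
    hwalk f f₀ (hconn.preconnected f f₀).some
  have : c' i.1 = 0 := (hall i.1).trans hc'0
  simpa [hc'def, i.2] using this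
end

section
/- Let E, F, D, f₀ be as in the setup. Then the set of solutions x : I → ZMod 2 of the Pfaffian system and the set {y : E → ZMod 2 | y is a Pfaffian orientation relative to f₀} have the same cardinality. (Solutions of the face-and-edge equation system correspond bijectively to Pfaffian orientations.) -/
/-- Solutions of the Pfaffian system of face and edge equations correspond bijectively
to Pfaffian orientations: the two sets have the same cardinality. -/
theorem pfaffian_system_solutions_card_eq
    (E F : Type*) [Fintype E] [Fintype F] [DecidableEq E] [DecidableEq F]
    (D : Matrix E F ℤ)
    (hD : ∀ e : E, ∃ f g : F, f ≠ g ∧ D e f = 1 ∧ D e g = -1 ∧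
      ∀ h : F, h ≠ f → h ≠ g → D e h = 0)
    (f₀ : F) :
    Nat.card {x : {p : F × E // p.1 ≠ f₀ ∧ D p.2 p.1 ≠ 0} → ZMod 2 |
        (∀ f : F, f ≠ f₀ →
          ∑ i ∈ Finset.univ.filter
              (fun i : {p : F × E // p.1 ≠ f₀ ∧ D p.2 p.1 ≠ 0} => i.1.1 = f),
            x i = 1) ∧
        (∀ (e : E) (f g : F), f ≠ g → ∀ (hf0 : f ≠ f₀) (hg0 : g ≠ f₀)
          (hf : D e f ≠ 0) (hg : D e g ≠ 0),
          x ⟨(f, e), ⟨hf0, hf⟩⟩ + x ⟨(g, e), ⟨hg0, hg⟩⟩ = 1)} =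
    Nat.card {y : E → ZMod 2 | ∀ f : F, f ≠ f₀ →
        ∑ e ∈ Finset.univ.filter (fun e : E => D e f ≠ 0),
          ((if D e f = -1 then (1 : ZMod 2) else 0) + y e) = 1} := by
  classical
  choose f1 g1 hne hf1 hg1 h0 using hD
  have hmem : ∀ e h, D e h ≠ 0 → h = f1 e ∨ h = g1 e := by
    intro e h hh
    by_contra hc
    push_neg at hc
    exact hh (h0 e h hc.1 hc.2)
  have hf1ne : ∀ e, D e (f1 e) ≠ 0 := fun e => by rw [hf1]; norm_num
  have hg1ne : ∀ e, D e (g1 e) ≠ 0 := fun e => by rw [hg1]; norm_num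
  set I := {p : F × E // p.1 ≠ f₀ ∧ D p.2 p.1 ≠ 0} with hI
  -- small ZMod 2 facts
  have z1 : ∀ a b : ZMod 2, a + b = 1 → b = 1 + a := by decide
  have z2 : ∀ a : ZMod 2, (0 : ZMod 2) + a + (1 + a) = 1 := by decide
  have z3 : ∀ a : ZMod 2, (1 : ZMod 2) + a + (0 + a) = 1 := by decide
  have z4 : ∀ a : ZMod 2, (1 : ZMod 2) + (a + 1) = a := by decide
  have z5 : ∀ a : ZMod 2, (1 : ZMod 2) + a + 1 = a := by decide
  -- forward map: from solutions to orientations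
  let Ψ : (I → ZMod 2) → (E → ZMod 2) := fun x e =>
    if h : f1 e = f₀ then
      x ⟨(g1 e, e), ⟨fun hg => hne e (h.trans hg.symm), hg1ne e⟩⟩ + 1
    else x ⟨(f1 e, e), ⟨h, hf1ne e⟩⟩
  -- backward map: from orientations to solutions
  let Φ : (E → ZMod 2) → (I → ZMod 2) := fun y i =>
    (if D i.1.2 i.1.1 = -1 then 1 else 0) + y i.1.2
  -- reindexing of face sums
  have reindex : ∀ (x : I → ZMod 2) (f : F) (hf : f ≠ f₀),
      ∑ i ∈ Finset.univ.filter (fun i : I => i.1.1 = f), x i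
        = ∑ e ∈ Finset.univ.filter (fun e : E => D e f ≠ 0),
            (if h : D e f ≠ 0 then x ⟨(f, e), ⟨hf, h⟩⟩ else 0) := by
    intro x f hf
    refine Finset.sum_bij' (fun i _ => i.1.2)
      (fun e he => ⟨(f, e), ⟨hf, by simpa using he⟩⟩) ?_ ?_ ?_ ?_ ?_
    · intro a ha
      simp only [Finset.mem_filter, Finset.mem_univ, true_and] at ha ⊢
      rw [← ha]; exact a.2.2
    · intro a ha
      simp
    · intro a ha
      simp only [Finset.mem_filter, Finset.mem_univ, true_and] at ha
      apply Subtype.ext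
      apply Prod.ext <;> simp [ha]
    · intro a ha; rfl
    · intro a ha
      simp only [Finset.mem_filter, Finset.mem_univ, true_and] at ha
      have hd : D a.1.2 f ≠ 0 := by rw [← ha]; exact a.2.2
      rw [dif_pos hd]
      congr 1
      apply Subtype.ext
      apply Prod.ext <;> simp [ha]
  -- key per-term identity for solutions x
  have key : ∀ (x : I → ZMod 2),
      (∀ (e : E) (f g : F), f ≠ g → ∀ (hf0 : f ≠ f₀) (hg0 : g ≠ f₀)
          (hf : D e f ≠ 0) (hg : D e g ≠ 0),
          x ⟨(f, e), ⟨hf0, hf⟩⟩ + x ⟨(g, e), ⟨hg0, hg⟩⟩ = 1) →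
      ∀ (f : F) (hf : f ≠ f₀) (e : E) (h : D e f ≠ 0),
      (if D e f = -1 then (1 : ZMod 2) else 0) + Ψ x e = x ⟨(f, e), ⟨hf, h⟩⟩ := by
    intro x hedge f hf e h
    rcases hmem e f h with hc | hc
    · rw [if_neg (by rw [hc, hf1]; norm_num), zero_add]
      simp only [Ψ]
      rw [dif_neg (show f1 e ≠ f₀ from hc ▸ hf)]
      congr 1
      exact Subtype.ext (Prod.ext hc.symm rfl)
    · rw [if_pos (by rw [hc]; exact hg1 e)]
      have hx : x ⟨(f, e), ⟨hf, h⟩⟩ = x ⟨(g1 e, e), ⟨hc ▸ hf, hg1ne e⟩⟩ := by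
        congr 1
        exact Subtype.ext (Prod.ext hc rfl)
      rw [hx]
      simp only [Ψ]
      by_cases hcase : f1 e = f₀
      · rw [dif_pos hcase]
        exact z4 _
      · rw [dif_neg hcase]
        have := hedge e (f1 e) (g1 e) (hne e) hcase (hc ▸ hf) (hf1ne e) (hg1ne e)
        exact (z1 _ _ this).symm
  -- membership proofs
  have memΨ : ∀ x : I → ZMod 2,
      x ∈ {x : I → ZMod 2 |
        (∀ f : F, f ≠ f₀ →
          ∑ i ∈ Finset.univ.filter (fun i : I => i.1.1 = f), x i = 1) ∧
        (∀ (e : E) (f g : F), f ≠ g → ∀ (hf0 : f ≠ f₀) (hg0 : g ≠ f₀)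
          (hf : D e f ≠ 0) (hg : D e g ≠ 0),
          x ⟨(f, e), ⟨hf0, hf⟩⟩ + x ⟨(g, e), ⟨hg0, hg⟩⟩ = 1)} →
      Ψ x ∈ {y : E → ZMod 2 | ∀ f : F, f ≠ f₀ →
        ∑ e ∈ Finset.univ.filter (fun e : E => D e f ≠ 0),
          ((if D e f = -1 then (1 : ZMod 2) else 0) + y e) = 1} := by
    intro x hx f hf
    obtain ⟨hface, hedge⟩ := hx
    calc ∑ e ∈ Finset.univ.filter (fun e : E => D e f ≠ 0),
            ((if D e f = -1 then (1 : ZMod 2) else 0) + Ψ x e)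
        = ∑ e ∈ Finset.univ.filter (fun e : E => D e f ≠ 0),
            (if h : D e f ≠ 0 then x ⟨(f, e), ⟨hf, h⟩⟩ else 0) := by
          apply Finset.sum_congr rfl
          intro e he
          simp only [Finset.mem_filter, Finset.mem_univ, true_and] at he
          rw [dif_pos he]
          exact key x hedge f hf e he
      _ = ∑ i ∈ Finset.univ.filter (fun i : I => i.1.1 = f), x i :=
          (reindex x f hf).symm
      _ = 1 := hface f hf
  have memΦ : ∀ y : E → ZMod 2,
      y ∈ {y : E → ZMod 2 | ∀ f : F, f ≠ f₀ →
        ∑ e ∈ Finset.univ.filter (fun e : E => D e f ≠ 0),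
          ((if D e f = -1 then (1 : ZMod 2) else 0) + y e) = 1} →
      Φ y ∈ {x : I → ZMod 2 |
        (∀ f : F, f ≠ f₀ →
          ∑ i ∈ Finset.univ.filter (fun i : I => i.1.1 = f), x i = 1) ∧
        (∀ (e : E) (f g : F), f ≠ g → ∀ (hf0 : f ≠ f₀) (hg0 : g ≠ f₀)
          (hf : D e f ≠ 0) (hg : D e g ≠ 0),
          x ⟨(f, e), ⟨hf0, hf⟩⟩ + x ⟨(g, e), ⟨hg0, hg⟩⟩ = 1)} := by
    intro y hy
    constructor
    · intro f hf
      rw [reindex (Φ y) f hf]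
      calc ∑ e ∈ Finset.univ.filter (fun e : E => D e f ≠ 0),
              (if h : D e f ≠ 0 then Φ y ⟨(f, e), ⟨hf, h⟩⟩ else 0)
          = ∑ e ∈ Finset.univ.filter (fun e : E => D e f ≠ 0),
              ((if D e f = -1 then (1 : ZMod 2) else 0) + y e) := by
            apply Finset.sum_congr rfl
            intro e he
            simp only [Finset.mem_filter, Finset.mem_univ, true_and] at he
            rw [dif_pos he]
        _ = 1 := hy f hf
    · intro e f g hfg hf0 hg0 hf hg
      simp only [Φ]
      rcases hmem e f hf with hcf | hcf <;> rcases hmem e g hg with hcg | hcg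
      · exact absurd (hcf.trans hcg.symm) hfg
      · subst hcf; subst hcg
        rw [if_neg (by rw [hf1]; norm_num), if_pos (hg1 e)]
        exact z2 _
      · subst hcf; subst hcg
        rw [if_pos (hg1 e), if_neg (by rw [hf1]; norm_num)]
        exact z3 _
      · exact absurd (hcf.trans hcg.symm) hfg
  apply Nat.card_congr
  refine ⟨fun x => ⟨Ψ x.1, memΨ x.1 x.2⟩, fun y => ⟨Φ y.1, memΦ y.1 y.2⟩, ?_, ?_⟩
  · -- Φ ∘ Ψ = id on solutions
    rintro ⟨x, hx⟩
    apply Subtype.ext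
    funext i
    obtain ⟨⟨f, e⟩, hf, h⟩ := i
    exact key x hx.2 f hf e h
  · -- Ψ ∘ Φ = id on orientations
    rintro ⟨y, hy⟩
    apply Subtype.ext
    funext e
    show Ψ (Φ y) e = y e
    simp only [Ψ, Φ]
    by_cases hcase : f1 e = f₀
    · rw [dif_pos hcase, if_pos (hg1 e)]
      exact z5 _
    · rw [dif_neg hcase, if_neg (by rw [hf1]; norm_num), zero_add]
end

section
/- Let E, F, D, f₀, I be as in the setup, and let P be the coefficient matrix over ZMod 2 of the Pfaffian system: its rows are indexed by {f : F // f ≠ f₀} ⊕ {e : E // e is internal} and its columns by I, with P (inl f') (f, e) = 1 iff f' = f (else 0), and P (inr e') (f, e) = 1 iff e' = e (else 0). Then the rank of P over the field ZMod 2 equals (Fintype.card F - 1) + (the number of internal edges). -/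
open Matrix

/-- The rank of the Pfaffian matrix (coefficient matrix of the face and edge equations,
over `ZMod 2`) equals `(|F| - 1) +` (number of internal edges). -/
theorem pfaffian_matrix_rank
    (E F : Type*) [Fintype E] [Fintype F] [DecidableEq E] [DecidableEq F]
    (D : Matrix E F ℤ)
    (hD : ∀ e : E, ∃ f g : F, f ≠ g ∧ D e f = 1 ∧ D e g = -1 ∧
      ∀ h : F, h ≠ f → h ≠ g → D e h = 0)
    (hconn : (SimpleGraph.fromRel (fun f g : F => ∃ e : E, D e f ≠ 0 ∧ D e g ≠ 0)).Connected)
    (f₀ : F)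
    (P : Matrix
      ({f : F // f ≠ f₀} ⊕
        {e : E // ∃ f g : F, f ≠ g ∧ f ≠ f₀ ∧ g ≠ f₀ ∧ D e f ≠ 0 ∧ D e g ≠ 0})
      {p : F × E // p.1 ≠ f₀ ∧ D p.2 p.1 ≠ 0} (ZMod 2))
    (hPface : ∀ (f' : {f : F // f ≠ f₀}) (i : {p : F × E // p.1 ≠ f₀ ∧ D p.2 p.1 ≠ 0}),
      P (Sum.inl f') i = if f'.1 = i.1.1 then 1 else 0)
    (hPedge : ∀ (e' : {e : E // ∃ f g : F, f ≠ g ∧ f ≠ f₀ ∧ g ≠ f₀ ∧ D e f ≠ 0 ∧ D e g ≠ 0})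
      (i : {p : F × E // p.1 ≠ f₀ ∧ D p.2 p.1 ≠ 0}),
      P (Sum.inr e') i = if e'.1 = i.1.2 then 1 else 0) :
    P.rank = (Fintype.card F - 1) +
      @Fintype.card {e : E // ∃ f g : F, f ≠ g ∧ f ≠ f₀ ∧ g ≠ f₀ ∧ D e f ≠ 0 ∧ D e g ≠ 0}
        (@Subtype.fintype _ _ (fun _ => Fintype.decidableExistsFintype) _) := by
  classical
  -- notation
  set G := SimpleGraph.fromRel (fun f g : F => ∃ e : E, D e f ≠ 0 ∧ D e g ≠ 0) with hG
  -- an edge touching f₀ is not internal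
  have notint : ∀ (e : E) (f : F), f ≠ f₀ → D e f ≠ 0 → D e f₀ ≠ 0 →
      ¬ (∃ f g : F, f ≠ g ∧ f ≠ f₀ ∧ g ≠ f₀ ∧ D e f ≠ 0 ∧ D e g ≠ 0) := by
    intro e f hf hDf hD0 ⟨f', g', hfg', hf', hg', hDf', hDg'⟩
    obtain ⟨a, b, hab, ha, hb, hz⟩ := hD e
    have mem : ∀ h : F, D e h ≠ 0 → h = a ∨ h = b := by
      intro h hh
      by_contra hc
      push_neg at hc
      exact hh (hz h hc.1 hc.2)
    rcases mem f₀ hD0 with h0 | h0 <;>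
      rcases mem f' hDf' with h1 | h1 <;>
      rcases mem g' hDg' with h2 | h2 <;>
      first
        | exact hf' (h1.trans h0.symm)
        | exact hg' (h2.trans h0.symm)
        | exact hfg' (h1.trans h2.symm)
  -- the transpose has injective mulVecLin
  have key : Function.Injective Pᵀ.mulVecLin := by
    rw [← LinearMap.ker_eq_bot, LinearMap.ker_eq_bot']
    intro v hv
    have hcol : ∀ (c : {p : F × E // p.1 ≠ f₀ ∧ D p.2 p.1 ≠ 0}),
        (∑ f' : {f : F // f ≠ f₀}, (if f'.1 = c.1.1 then v (Sum.inl f') else 0)) +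
        (∑ e' : {e : E // ∃ f g : F, f ≠ g ∧ f ≠ f₀ ∧ g ≠ f₀ ∧ D e f ≠ 0 ∧ D e g ≠ 0},
          (if e'.1 = c.1.2 then v (Sum.inr e') else 0)) = 0 := by
      intro c
      have h := congrFun hv c
      simpa [Matrix.mulVecLin_apply, Matrix.mulVec_transpose, Matrix.vecMul, dotProduct,
        Fintype.sum_sum_type, hPface, hPedge, mul_ite, mul_one, mul_zero] using h
    -- face part of a column sum
    have hface_sum : ∀ (f : F) (hf : f ≠ f₀),
        (∑ f' : {f : F // f ≠ f₀}, (if f'.1 = f then v (Sum.inl f') else 0))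
          = v (Sum.inl ⟨f, hf⟩) := by
      intro f hf
      rw [Finset.sum_eq_single (⟨f, hf⟩ : {f : F // f ≠ f₀})]
      · simp
      · intro b _ hb
        rw [if_neg]
        exact fun h => hb (Subtype.ext h)
      · intro h
        exact absurd (Finset.mem_univ _) h
    -- edge part when the edge is internal
    have hedge_sum : ∀ (e : E)
        (he : ∃ f g : F, f ≠ g ∧ f ≠ f₀ ∧ g ≠ f₀ ∧ D e f ≠ 0 ∧ D e g ≠ 0),
        (∑ e' : {e : E // ∃ f g : F, f ≠ g ∧ f ≠ f₀ ∧ g ≠ f₀ ∧ D e f ≠ 0 ∧ D e g ≠ 0},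
          (if e'.1 = e then v (Sum.inr e') else 0)) = v (Sum.inr ⟨e, he⟩) := by
      intro e he
      rw [Finset.sum_eq_single (⟨e, he⟩ :
          {e : E // ∃ f g : F, f ≠ g ∧ f ≠ f₀ ∧ g ≠ f₀ ∧ D e f ≠ 0 ∧ D e g ≠ 0})]
      · simp
      · intro b _ hb
        rw [if_neg]
        exact fun h => hb (Subtype.ext h)
      · intro h
        exact absurd (Finset.mem_univ _) h
    -- edge part when the edge is not internal
    have hedge_sum0 : ∀ (e : E)
        (he : ¬ ∃ f g : F, f ≠ g ∧ f ≠ f₀ ∧ g ≠ f₀ ∧ D e f ≠ 0 ∧ D e g ≠ 0),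
        (∑ e' : {e : E // ∃ f g : F, f ≠ g ∧ f ≠ f₀ ∧ g ≠ f₀ ∧ D e f ≠ 0 ∧ D e g ≠ 0},
          (if e'.1 = e then v (Sum.inr e') else 0)) = 0 := by
      intro e he
      apply Finset.sum_eq_zero
      intro e' _
      rw [if_neg]
      exact fun h => he (h ▸ e'.2)
    -- all face coefficients vanish
    have hfaces : ∀ (n : ℕ) (f : F) (hf : f ≠ f₀) (w : G.Walk f f₀), w.length = n →
        v (Sum.inl ⟨f, hf⟩) = 0 := by
      intro n
      induction n using Nat.strong_induction_on with
      | _ n ih =>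
      intro f hf w hw
      cases w with
      | nil => exact absurd rfl hf
      | @cons _ b _ hadj p =>
        have hfb : f ≠ b := hadj.ne
        have hex : ∃ e : E, D e f ≠ 0 ∧ D e b ≠ 0 := by
          rw [hG, SimpleGraph.fromRel_adj] at hadj
          rcases hadj.2 with ⟨e, h1, h2⟩ | ⟨e, h1, h2⟩
          · exact ⟨e, h1, h2⟩
          · exact ⟨e, h2, h1⟩
        obtain ⟨e, hef, heb⟩ := hex
        by_cases hb : b = f₀
        · subst hb
          have hc := hcol ⟨(f, e), hf, hef⟩
          rw [hface_sum f hf, hedge_sum0 e (notint e f hf hef heb)] at hc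
          simpa using hc
        · have he : ∃ f g : F, f ≠ g ∧ f ≠ f₀ ∧ g ≠ f₀ ∧ D e f ≠ 0 ∧ D e g ≠ 0 :=
            ⟨f, b, hfb, hf, hb, hef, heb⟩
          have hc1 := hcol ⟨(f, e), hf, hef⟩
          have hc2 := hcol ⟨(b, e), hb, heb⟩
          rw [hface_sum f hf, hedge_sum e he] at hc1
          rw [hface_sum b hb, hedge_sum e he] at hc2
          have hvb : v (Sum.inl ⟨b, hb⟩) = 0 := by
            apply ih p.length _ b hb p rfl
            rw [← hw, SimpleGraph.Walk.length_cons]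
            omega
          rw [hvb, zero_add] at hc2
          rw [hc2, add_zero] at hc1
          exact hc1
    have hface0 : ∀ (f' : {f : F // f ≠ f₀}), v (Sum.inl f') = 0 := by
      intro ⟨f, hf⟩
      obtain ⟨w⟩ := hconn.preconnected f f₀
      exact hfaces w.length f hf w rfl
    have hedge0 : ∀ (e' : {e : E // ∃ f g : F, f ≠ g ∧ f ≠ f₀ ∧ g ≠ f₀ ∧ D e f ≠ 0 ∧ D e g ≠ 0}),
        v (Sum.inr e') = 0 := by
      intro ⟨e, he⟩
      obtain ⟨f, g, hfg, hf, hg, hDf, hDg⟩ := he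
      have hc := hcol ⟨(f, e), hf, hDf⟩
      rw [hface_sum f hf, hedge_sum e ⟨f, g, hfg, hf, hg, hDf, hDg⟩, hface0 ⟨f, hf⟩,
        zero_add] at hc
      exact hc
    funext r
    cases r with
    | inl f' => exact hface0 f'
    | inr e' => exact hedge0 e'
  -- conclude the rank computation
  rw [← Matrix.rank_transpose, Matrix.rank, LinearMap.finrank_range_of_inj key,
    Module.finrank_pi, Fintype.card_sum]
  have h1 : Fintype.card {f : F // f ≠ f₀} = Fintype.card F - 1 := by
    rw [Fintype.card_subtype_compl]
    simp
  rw [h1]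
  simp only [Fintype.card_eq_nat_card]
end

section
/- Let E, F, D, f₀, I be as in the setup. Consider the ZMod 2-subspace of functions x : I → ZMod 2 consisting of the solutions of the homogeneous Pfaffian system: for every f ≠ f₀, ∑ over {e | D e f ≠ 0} of x (f, e) = 0, and for every internal edge e with faces f g (f ≠ g, both ≠ f₀, D e f ≠ 0 ≠ D e g), x (f, e) + x (g, e) = 0. Then Fintype.card F ≤ Fintype.card E + 1 and the dimension of this subspace over ZMod 2 equals Fintype.card E + 1 - Fintype.card F (the nullity of the Pfaffian matrix is d - p + 1, where d is the number of edges and p the number of faces of the closed surface). -/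
set_option linter.unusedSectionVars false

section Aux

variable {E F : Type*} [Fintype E] [Fintype F] [DecidableEq E] [DecidableEq F]

private lemma zmod2_add_eq_zero_iff : ∀ a b : ZMod 2, a + b = 0 ↔ a = b := by decide

private lemma zmod2_self_add {M : Type*} [AddCommGroup M] [Module (ZMod 2) M] (a : M) :
    a + a = 0 := by
  have h : (2 : ZMod 2) • a = a + a := two_smul _ a
  rw [← h, show (2 : ZMod 2) = 0 by decide, zero_smul]

/-- The full incidence map over `ZMod 2`. -/
private def Tmap (D : Matrix E F ℤ) : (E → ZMod 2) →ₗ[ZMod 2] (F → ZMod 2) where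
  toFun y := fun f => ∑ e ∈ Finset.univ.filter (fun e => D e f ≠ 0), y e
  map_add' y z := by funext f; simp [Finset.sum_add_distrib]
  map_smul' c y := by funext f; simp [Finset.mul_sum]

private lemma Tmap_apply (D : Matrix E F ℤ) (y : E → ZMod 2) (f : F) :
    Tmap D y f = ∑ e ∈ Finset.univ.filter (fun e => D e f ≠ 0), y e := rfl

private lemma ne_zero_iff (D : Matrix E F ℤ)
    (hD : ∀ e : E, ∃ f g : F, f ≠ g ∧ D e f = 1 ∧ D e g = -1 ∧
      ∀ h : F, h ≠ f → h ≠ g → D e h = 0)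
    {e : E} {f g : F} (hfg : f ≠ g) (hf : D e f ≠ 0) (hg : D e g ≠ 0) :
    ∀ h : F, D e h ≠ 0 ↔ h = f ∨ h = g := by
  obtain ⟨p, q, hpq, hp, hq, h0⟩ := hD e
  have hmem : ∀ h : F, D e h ≠ 0 → h = p ∨ h = q := by
    intro h hh
    by_contra hc
    push_neg at hc
    exact hh (h0 h hc.1 hc.2)
  have hfpq := hmem f hf
  have hgpq := hmem g hg
  intro h
  constructor
  · intro hh
    rcases hmem h hh with rfl | rfl <;> rcases hfpq with rfl | rfl <;>
      rcases hgpq with rfl | rfl <;> tauto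
  · rintro (rfl | rfl)
    · exact hf
    · exact hg

private lemma Tmap_single (D : Matrix E F ℤ)
    (hD : ∀ e : E, ∃ f g : F, f ≠ g ∧ D e f = 1 ∧ D e g = -1 ∧
      ∀ h : F, h ≠ f → h ≠ g → D e h = 0)
    {e : E} {f g : F} (hfg : f ≠ g) (hf : D e f ≠ 0) (hg : D e g ≠ 0) :
    Tmap D (Pi.single e 1) = Pi.single f 1 + Pi.single g 1 := by
  funext h
  have key := ne_zero_iff D hD hfg hf hg h
  rw [Tmap_apply, Finset.sum_pi_single']
  simp only [Finset.mem_filter, Finset.mem_univ, true_and]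
  rcases eq_or_ne h f with rfl | hhf
  · rw [if_pos (key.mpr (Or.inl rfl))]
    simp [Pi.single_apply, hfg.symm]
  · rcases eq_or_ne h g with rfl | hhg
    · rw [if_pos (key.mpr (Or.inr rfl))]
      simp [Pi.single_apply, hfg]
    · rw [if_neg (fun hc => by rcases key.mp hc with h1 | h1 <;> [exact hhf h1; exact hhg h1])]
      simp [Pi.single_apply, hhf, hhg]

private lemma exists_walk_sum (D : Matrix E F ℤ)
    (hD : ∀ e : E, ∃ f g : F, f ≠ g ∧ D e f = 1 ∧ D e g = -1 ∧
      ∀ h : F, h ≠ f → h ≠ g → D e h = 0)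
    {f f' : F}
    (w : (SimpleGraph.fromRel (fun f g : F => ∃ e : E, D e f ≠ 0 ∧ D e g ≠ 0)).Walk f f') :
    ∃ y : E → ZMod 2, Tmap D y = Pi.single f 1 + Pi.single f' 1 := by
  induction w with
  | nil =>
    exact ⟨0, by rw [map_zero, zmod2_self_add]⟩
  | @cons a c b hadj p ih =>
    obtain ⟨y, hy⟩ := ih
    rw [SimpleGraph.fromRel_adj] at hadj
    obtain ⟨hac, hrel⟩ := hadj
    have hedge : ∃ e : E, D e a ≠ 0 ∧ D e c ≠ 0 := by
      rcases hrel with h | h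
      · exact h
      · obtain ⟨e, h1, h2⟩ := h; exact ⟨e, h2, h1⟩
    obtain ⟨e, ha, hc⟩ := hedge
    refine ⟨y + Pi.single e 1, ?_⟩
    rw [map_add, hy, Tmap_single D hD hac ha hc]
    funext h
    simp only [Pi.add_apply]
    exact (show ∀ x y z : ZMod 2, (x + y) + (z + x) = z + y by decide) _ _ _

end Aux

/-- The nullity of the Pfaffian matrix: the space of solutions of the homogeneous
Pfaffian system has dimension `|E| + 1 - |F|` over `ZMod 2`. -/
theorem pfaffian_system_nullity
    (E F : Type*) [Fintype E] [Fintype F] [DecidableEq E] [DecidableEq F]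
    (D : Matrix E F ℤ)
    (hD : ∀ e : E, ∃ f g : F, f ≠ g ∧ D e f = 1 ∧ D e g = -1 ∧
      ∀ h : F, h ≠ f → h ≠ g → D e h = 0)
    (hconn : (SimpleGraph.fromRel (fun f g : F => ∃ e : E, D e f ≠ 0 ∧ D e g ≠ 0)).Connected)
    (f₀ : F) :
    Fintype.card F ≤ Fintype.card E + 1 ∧
    ∀ W : Submodule (ZMod 2) ({p : F × E // p.1 ≠ f₀ ∧ D p.2 p.1 ≠ 0} → ZMod 2),
      (W : Set ({p : F × E // p.1 ≠ f₀ ∧ D p.2 p.1 ≠ 0} → ZMod 2)) =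
        {x | (∀ f : F, f ≠ f₀ →
            ∑ i ∈ Finset.univ.filter
                (fun i : {p : F × E // p.1 ≠ f₀ ∧ D p.2 p.1 ≠ 0} => i.1.1 = f),
              x i = 0) ∧
          (∀ (e : E) (f g : F), f ≠ g → ∀ (hf0 : f ≠ f₀) (hg0 : g ≠ f₀)
            (hf : D e f ≠ 0) (hg : D e g ≠ 0),
            x ⟨(f, e), ⟨hf0, hf⟩⟩ + x ⟨(g, e), ⟨hg0, hg⟩⟩ = 0)} →
      Module.finrank (ZMod 2) W = Fintype.card E + 1 - Fintype.card F := by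
  classical
  set I := {p : F × E // p.1 ≠ f₀ ∧ D p.2 p.1 ≠ 0} with hI
  -- the reduced incidence map
  set L : (E → ZMod 2) →ₗ[ZMod 2] ({f : F // f ≠ f₀} → ZMod 2) :=
    (LinearMap.funLeft (ZMod 2) (ZMod 2) (Subtype.val)).comp (Tmap D) with hL
  have hLapp : ∀ (y : E → ZMod 2) (f : {f : F // f ≠ f₀}),
      L y f = ∑ e ∈ Finset.univ.filter (fun e => D e f.1 ≠ 0), y e := fun y f => rfl
  -- surjectivity of L
  have hLsurj : Function.Surjective L := by
    rw [← LinearMap.range_eq_top, eq_top_iff,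
      ← (Pi.basisFun (ZMod 2) {f : F // f ≠ f₀}).span_eq, Submodule.span_le]
    rintro _ ⟨f, rfl⟩
    obtain ⟨y, hy⟩ := exists_walk_sum D hD (hconn.preconnected f.1 f₀).some
    refine ⟨y, ?_⟩
    funext g
    have h1 : L y g = Tmap D y g.1 := rfl
    rw [h1, hy]
    simp only [Pi.add_apply, Pi.single_apply, Pi.basisFun_apply]
    rw [if_neg g.2, add_zero]
    by_cases hgf : g = f
    · subst hgf
      simp [Pi.single_apply]
    · rw [if_neg (fun hc => hgf (Subtype.ext hc))]
      simp [Pi.single_apply, hgf]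
  -- the pullback map
  set Φ : (E → ZMod 2) →ₗ[ZMod 2] (I → ZMod 2) :=
    LinearMap.funLeft (ZMod 2) (ZMod 2) (fun i : I => i.1.2) with hΦ
  have hΦapp : ∀ (y : E → ZMod 2) (i : I), Φ y i = y i.1.2 := fun y i => rfl
  -- every edge has a chosen face ≠ f₀
  have hface : ∀ e : E, ∃ f : F, f ≠ f₀ ∧ D e f ≠ 0 := by
    intro e
    obtain ⟨f, g, hfg, hf, hg, _⟩ := hD e
    by_cases hf0 : f = f₀
    · exact ⟨g, by rw [← hf0]; exact hfg.symm, by rw [hg]; norm_num⟩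
    · exact ⟨f, hf0, by rw [hf]; norm_num⟩
  choose cf hcf0 hcfD using hface
  have hΦinj : Function.Injective Φ := by
    intro y z hyz
    funext e
    exact congrFun hyz ⟨(cf e, e), hcf0 e, hcfD e⟩
  -- sum reindexing
  have hsum : ∀ (x : I → ZMod 2) (f : F) (hf : f ≠ f₀) (v : E → ZMod 2),
      (∀ (e : E) (he : D e f ≠ 0), x ⟨(f, e), hf, he⟩ = v e) →
      ∑ i ∈ Finset.univ.filter (fun i : I => i.1.1 = f), x i
        = ∑ e ∈ Finset.univ.filter (fun e => D e f ≠ 0), v e := by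
    intro x f hf v hv
    refine Finset.sum_bij' (fun (i : I) _ => i.1.2)
      (fun e he => ⟨(f, e), hf, by simpa using (Finset.mem_filter.mp he).2⟩)
      ?_ ?_ ?_ ?_ ?_
    · rintro ⟨⟨g, e⟩, hg0, hgD⟩ hmem
      simp only [Finset.mem_filter, Finset.mem_univ, true_and] at hmem ⊢
      subst hmem
      exact hgD
    · intro e he
      simp
    · rintro ⟨⟨g, e⟩, hg0, hgD⟩ hmem
      simp only [Finset.mem_filter, Finset.mem_univ, true_and] at hmem
      subst hmem
      rfl
    · intro e he
      rfl
    · rintro ⟨⟨g, e⟩, hg0, hgD⟩ hmem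
      simp only [Finset.mem_filter, Finset.mem_univ, true_and] at hmem
      subst hmem
      exact hv e hgD
  -- dimension bookkeeping
  have hcard1 : Fintype.card {f : F // f ≠ f₀} = Fintype.card F - 1 := by
    have := Fintype.card_subtype_compl (fun f : F => f = f₀)
    rw [Fintype.card_subtype_eq] at this
    exact this
  have hcardF : 1 ≤ Fintype.card F := Fintype.card_pos_iff.mpr ⟨f₀⟩
  have hrn := LinearMap.finrank_range_add_finrank_ker L
  rw [LinearMap.range_eq_top.mpr hLsurj, finrank_top,
    Module.finrank_fintype_fun_eq_card, Module.finrank_fintype_fun_eq_card, hcard1] at hrn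
  constructor
  · omega
  · intro W hW
    have hWeq : W = Submodule.map Φ (LinearMap.ker L) := by
      apply SetLike.coe_injective
      rw [hW]
      ext x
      simp only [Set.mem_setOf_eq, Submodule.map_coe, Set.mem_image, SetLike.mem_coe,
        LinearMap.mem_ker]
      constructor
      · rintro ⟨ha, hb⟩
        have hkey : ∀ (f : F) (hf : f ≠ f₀) (e : E) (he : D e f ≠ 0),
            x ⟨(cf e, e), hcf0 e, hcfD e⟩ = x ⟨(f, e), hf, he⟩ := by
          intro f hf e he
          rcases eq_or_ne (cf e) f with hq | hq
          · subst hq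
            rfl
          · exact (zmod2_add_eq_zero_iff _ _).mp
              (hb e (cf e) f hq (hcf0 e) hf (hcfD e) he)
        refine ⟨fun e => x ⟨(cf e, e), hcf0 e, hcfD e⟩, ?_, ?_⟩
        · funext f
          rw [hLapp, Pi.zero_apply,
            ← hsum x f.1 f.2 _ (fun e he => (hkey f.1 f.2 e he).symm)]
          exact ha f.1 f.2
        · funext i
          obtain ⟨⟨f, e⟩, hf0, hfD⟩ := i
          exact hkey f hf0 e hfD
      · rintro ⟨y, hker, rfl⟩
        constructor
        · intro f hf
          rw [hsum (Φ y) f hf y (fun e he => rfl)]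
          have := congrFun hker ⟨f, hf⟩
          rw [hLapp] at this
          exact this
        · intro e f g hfg hf0 hg0 hf hg
          exact zmod2_self_add (y e)
    rw [hWeq,
      ← LinearEquiv.finrank_eq (Submodule.equivMapOfInjective Φ hΦinj (LinearMap.ker L))]
    omega
end

section
/- Let n, R, A satisfy the row hypothesis of the setup. Then the sum, over all supported permutations σ : Equiv.Perm n that are cyclic, of the weights Λ(σ) = (sign σ) * ∏ i, A i (σ i), equals 0 in R. (The contributions of cyclic perfect matchings cancel in pairs via a sign-reversing involution.) -/
set_option linter.unusedSectionVars false

namespace CyclicCancel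

open Function List Equiv

variable {n : Type*} [Fintype n] [DecidableEq n]
variable {R : Type*} [CommRing R]

variable (A : Matrix n n R)

/-- `j` is a potential predecessor of `i`. -/
def Grel (σ : Equiv.Perm n) (i j : n) : Prop := σ j ≠ σ i ∧ A i (σ j) ≠ 0

open Classical in
/-- The canonical predecessor function. -/
noncomputable def predf (σ : Equiv.Perm n) (i : n) : n :=
  if h : ∃ j, Grel A σ i j then h.choose else i

/-- The set of rows lying on a (predecessor-)cycle. -/
def Cyc (σ : Equiv.Perm n) : Set n :=
  {i | (∃ m, 0 < m ∧ (predf A σ)^[m] i = i) ∧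
    ∀ t : ℕ, ∃ j, Grel A σ ((predf A σ)^[t] i) j}

/-- The canonical cycle (as a list) through a cyclic row `m`. -/
noncomputable def cyl (σ : Equiv.Perm n) (m : n) : List n :=
  (List.range (Function.minimalPeriod (predf A σ) m)).map (fun t => (predf A σ)^[t] m)

/-- The cyclic permutation associated to the canonical cycle through `m`. -/
noncomputable def zp (σ : Equiv.Perm n) (m : n) : Equiv.Perm n :=
  (cyl A σ m).formPerm

variable {A}

lemma grel_predf {σ : Equiv.Perm n} {i : n} (h : ∃ j, Grel A σ i j) :
    Grel A σ i (predf A σ i) := by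
  rw [predf, dif_pos h]; exact h.choose_spec

lemma grel_unique (hrow2 : ∀ i : n, {j : n | A i j ≠ 0}.ncard ≤ 2)
    {σ : Equiv.Perm n} {i j j' : n} (hsupp : A i (σ i) ≠ 0)
    (hj : Grel A σ i j) (hj' : Grel A σ i j') : j = j' := by
  rcases hj with ⟨h1, h2⟩
  rcases hj' with ⟨h1', h2'⟩
  by_contra hne
  have hin : σ j ≠ σ j' → False := by
    intro hσ
    have hsub : ({σ i, σ j, σ j'} : Set n) ⊆ {j : n | A i j ≠ 0} := by
      rintro x (rfl | rfl | rfl) <;> assumption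
    have h3 : ({σ i, σ j, σ j'} : Set n).ncard = 3 := by
      rw [Set.ncard_insert_of_notMem (by simp [h1.symm, h1'.symm]),
        Set.ncard_insert_of_notMem (by simp [hσ]), Set.ncard_singleton]
    have hle := Set.ncard_le_ncard hsub (Set.toFinite _)
    have h2' := hrow2 i
    omega
  exact hin fun h => hne (σ.injective h)

lemma predf_eq (hrow2 : ∀ i : n, {j : n | A i j ≠ 0}.ncard ≤ 2)
    {σ : Equiv.Perm n} {i j : n} (hsupp : A i (σ i) ≠ 0) (hj : Grel A σ i j) :
    predf A σ i = j :=
  grel_unique hrow2 hsupp (grel_predf ⟨j, hj⟩) hj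

section CycleFacts

variable {σ : Equiv.Perm n} {m : n} (hm : m ∈ Cyc A σ)

include hm

lemma per_pos : 0 < Function.minimalPeriod (predf A σ) m := by
  obtain ⟨⟨k, hk, hper⟩, _⟩ := hm
  exact Function.IsPeriodicPt.minimalPeriod_pos hk hper

lemma iterate_per (t : ℕ) :
    (predf A σ)^[t * Function.minimalPeriod (predf A σ) m] m = m := by
  induction t with
  | zero => simp
  | succ t ih =>
      rw [add_mul, one_mul, Function.iterate_add_apply, Function.iterate_minimalPeriod, ih]

lemma grel_iterate (t : ℕ) :
    Grel A σ ((predf A σ)^[t] m) (predf A σ ((predf A σ)^[t] m)) :=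
  grel_predf (hm.2 t)

lemma per_ge_two : 2 ≤ Function.minimalPeriod (predf A σ) m := by
  have hpos := per_pos hm
  by_contra h
  have h1 : Function.minimalPeriod (predf A σ) m = 1 := by omega
  have hfix : predf A σ m = m := by
    have h2 := Function.iterate_minimalPeriod (f := predf A σ) (x := m)
    rwa [h1, Function.iterate_one] at h2
  have h3 := (grel_iterate hm 0).1
  rw [Function.iterate_zero_apply, hfix] at h3
  exact h3 rfl

lemma length_cyl : (cyl A σ m).length = Function.minimalPeriod (predf A σ) m := by
  simp [cyl]

lemma nodup_cyl : (cyl A σ m).Nodup := by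
  rw [cyl]
  refine List.Nodup.map_on ?_ List.nodup_range
  intro a ha b hb hab
  exact Function.iterate_injOn_Iio_minimalPeriod
    (by simpa using ha) (by simpa using hb) hab

lemma mem_cyl_iff {i : n} : i ∈ cyl A σ m ↔ ∃ t : ℕ, (predf A σ)^[t] m = i := by
  constructor
  · intro h
    simp only [cyl, List.mem_map, List.mem_range] at h
    obtain ⟨t, _, ht⟩ := h
    exact ⟨t, ht⟩
  · rintro ⟨t, rfl⟩
    simp only [cyl, List.mem_map, List.mem_range]
    exact ⟨t % Function.minimalPeriod (predf A σ) m, Nat.mod_lt _ (per_pos hm),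
      Function.iterate_mod_minimalPeriod_eq⟩

lemma self_mem_cyl : m ∈ cyl A σ m := (mem_cyl_iff hm).2 ⟨0, rfl⟩

lemma iterate_mem_cyl {i : n} (hi : i ∈ cyl A σ m) (t : ℕ) :
    (predf A σ)^[t] i ∈ cyl A σ m := by
  obtain ⟨s, rfl⟩ := (mem_cyl_iff hm).1 hi
  exact (mem_cyl_iff hm).2 ⟨t + s, by rw [Function.iterate_add_apply]⟩

lemma pred_mem_cyl {i : n} (hi : i ∈ cyl A σ m) : predf A σ i ∈ cyl A σ m :=
  iterate_mem_cyl hm hi 1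

lemma grel_of_mem_cyl {i : n} (hi : i ∈ cyl A σ m) : Grel A σ i (predf A σ i) := by
  obtain ⟨t, rfl⟩ := (mem_cyl_iff hm).1 hi
  exact grel_iterate hm t

lemma iterate_per_mul_of_mem {i : n} (hi : i ∈ cyl A σ m) (t : ℕ) :
    (predf A σ)^[t * Function.minimalPeriod (predf A σ) m] i = i := by
  obtain ⟨s, rfl⟩ := (mem_cyl_iff hm).1 hi
  rw [← Function.Commute.iterate_iterate_self, iterate_per hm]

lemma iterate_per_of_mem {i : n} (hi : i ∈ cyl A σ m) :
    (predf A σ)^[Function.minimalPeriod (predf A σ) m] i = i := by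
  have h := iterate_per_mul_of_mem hm hi 1
  rwa [one_mul] at h

lemma zp_apply (i : n) : zp A σ m i = if i ∈ cyl A σ m then predf A σ i else i := by
  split_ifs with h
  · obtain ⟨t, ht, rfl⟩ := List.getElem_of_mem h
    rw [zp, List.formPerm_apply_getElem _ (nodup_cyl hm)]
    have hget : ∀ (s : ℕ) (hs : s < (cyl A σ m).length), (cyl A σ m)[s] = (predf A σ)^[s] m := by
      intro s hs
      simp [cyl]
    rw [hget, hget, length_cyl hm, Function.iterate_mod_minimalPeriod_eq,
      Function.iterate_succ_apply']
  · exact List.formPerm_apply_of_notMem h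

lemma zp_symm_apply (i : n) :
    (zp A σ m)⁻¹ i =
      if i ∈ cyl A σ m then (predf A σ)^[Function.minimalPeriod (predf A σ) m - 1] i else i := by
  rw [Equiv.Perm.inv_eq_iff_eq]
  split_ifs with h
  · rw [zp_apply hm, if_pos (iterate_mem_cyl hm h _),
      ← Function.iterate_succ_apply' (predf A σ) (Function.minimalPeriod (predf A σ) m - 1) i]
    have h1 : (Function.minimalPeriod (predf A σ) m - 1).succ
        = Function.minimalPeriod (predf A σ) m := Nat.succ_pred_eq_of_pos (per_pos hm)
    rw [h1, iterate_per_of_mem hm h]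
  · rw [zp_apply hm, if_neg h]

end CycleFacts


section Flip

variable {n : Type*} [Fintype n] [DecidableEq n]
variable {R : Type*} [CommRing R]
variable {A : Matrix n n R} {σ : Equiv.Perm n} {m : n}
variable (hrow2 : ∀ i : n, {j : n | A i j ≠ 0}.ncard ≤ 2)
variable (hsupp : ∀ i, A i (σ i) ≠ 0) (hm : m ∈ Cyc A σ)

include hsupp hm

lemma supp_flip : ∀ i, A i ((σ * zp A σ m) i) ≠ 0 := by
  intro i
  rw [Equiv.Perm.mul_apply, zp_apply hm]
  split_ifs with h
  · exact (grel_of_mem_cyl hm h).2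
  · exact hsupp i

lemma flip_apply_iterate {i : n} (hi : i ∈ cyl A σ m) :
    (σ * zp A σ m) ((predf A σ)^[Function.minimalPeriod (predf A σ) m - 1] i) = σ i := by
  rw [Equiv.Perm.mul_apply, zp_apply hm, if_pos (iterate_mem_cyl hm hi _),
    ← Function.iterate_succ_apply' (predf A σ) (Function.minimalPeriod (predf A σ) m - 1) i]
  have h1 : (Function.minimalPeriod (predf A σ) m - 1).succ
      = Function.minimalPeriod (predf A σ) m := Nat.succ_pred_eq_of_pos (per_pos hm)
  rw [h1, iterate_per_of_mem hm hi]

lemma grel_flip_on {i : n} (hi : i ∈ cyl A σ m) :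
    Grel A (σ * zp A σ m) i ((predf A σ)^[Function.minimalPeriod (predf A σ) m - 1] i) := by
  constructor
  · rw [flip_apply_iterate hsupp hm hi, Equiv.Perm.mul_apply, zp_apply hm, if_pos hi]
    exact ((grel_of_mem_cyl hm hi).1).symm
  · rw [flip_apply_iterate hsupp hm hi]
    exact hsupp i

include hrow2

lemma pred_flip_on {i : n} (hi : i ∈ cyl A σ m) :
    predf A (σ * zp A σ m) i
      = (predf A σ)^[Function.minimalPeriod (predf A σ) m - 1] i :=
  predf_eq hrow2 (supp_flip hsupp hm i) (grel_flip_on hsupp hm hi)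

lemma iterate_pred_flip_on {i : n} (hi : i ∈ cyl A σ m) (t : ℕ) :
    (predf A (σ * zp A σ m))^[t] i
      = (predf A σ)^[(Function.minimalPeriod (predf A σ) m - 1) * t] i := by
  induction t with
  | zero => simp
  | succ t ih =>
      rw [Function.iterate_succ_apply', ih, pred_flip_on hrow2 hsupp hm
        (iterate_mem_cyl hm hi _), ← Function.iterate_add_apply]
      congr 1
      ring

lemma mem_Cyc_flip : Cyc A σ ⊆ Cyc A (σ * zp A σ m) := by
  intro i hi
  by_cases h : i ∈ cyl A σ m
  · constructor
    · refine ⟨Function.minimalPeriod (predf A σ) m, per_pos hm, ?_⟩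
      rw [iterate_pred_flip_on hrow2 hsupp hm h]
      exact iterate_per_mul_of_mem hm h _
    · intro t
      rw [iterate_pred_flip_on hrow2 hsupp hm h]
      exact ⟨_, grel_flip_on hsupp hm (iterate_mem_cyl hm h _)⟩
  · obtain ⟨⟨M, hM, hMi⟩, hG⟩ := hi
    have hdisj : ∀ t : ℕ, (predf A σ)^[t] i ∉ cyl A σ m := by
      intro t ht
      have hMi' : Function.IsPeriodicPt (predf A σ) M i := hMi
      have hmul : (predf A σ)^[M * (t + 1)] i = i := hMi'.mul_const (t + 1)
      have hle : t ≤ M * (t + 1) := by nlinarith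
      have : i ∈ cyl A σ m := by
        have h2 : (predf A σ)^[M * (t + 1) - t] ((predf A σ)^[t] i) = i := by
          rw [← Function.iterate_add_apply, Nat.sub_add_cancel hle, hmul]
        rw [← h2]
        exact iterate_mem_cyl hm ht _
      exact h this
    have hgrel : ∀ t : ℕ, Grel A (σ * zp A σ m) ((predf A σ)^[t] i)
        ((predf A σ)^[t + 1] i) := by
      intro t
      have hg := grel_predf (hG t)
      rw [← Function.iterate_succ_apply' (predf A σ) t i] at hg
      have e1 : (σ * zp A σ m) ((predf A σ)^[t + 1] i) = σ ((predf A σ)^[t + 1] i) := by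
        rw [Equiv.Perm.mul_apply, zp_apply hm, if_neg (hdisj (t + 1))]
      have e2 : (σ * zp A σ m) ((predf A σ)^[t] i) = σ ((predf A σ)^[t] i) := by
        rw [Equiv.Perm.mul_apply, zp_apply hm, if_neg (hdisj t)]
      exact ⟨by rw [e1, e2]; exact hg.1, by rw [e1]; exact hg.2⟩
    have key : ∀ t : ℕ, (predf A (σ * zp A σ m))^[t] i = (predf A σ)^[t] i := by
      intro t
      induction t with
      | zero => simp
      | succ t ih =>
          rw [Function.iterate_succ_apply', ih,
            predf_eq hrow2 (supp_flip hsupp hm _) (hgrel t),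
            Function.iterate_succ_apply']
    exact ⟨⟨M, hM, by rw [key M]; exact hMi⟩,
      fun t => ⟨_, by rw [key t]; exact hgrel t⟩⟩

lemma m_mem_Cyc_flip : m ∈ Cyc A (σ * zp A σ m) :=
  mem_Cyc_flip hrow2 hsupp hm hm

lemma per_flip : Function.minimalPeriod (predf A (σ * zp A σ m)) m
    = Function.minimalPeriod (predf A σ) m := by
  set L := Function.minimalPeriod (predf A σ) m with hL
  have hm' := m_mem_Cyc_flip hrow2 hsupp hm
  have h1 : Function.IsPeriodicPt (predf A (σ * zp A σ m)) L m := by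
    show (predf A (σ * zp A σ m))^[L] m = m
    rw [iterate_pred_flip_on hrow2 hsupp hm (self_mem_cyl hm)]
    exact iterate_per_mul_of_mem hm (self_mem_cyl hm) _
  have hdvd1 : Function.minimalPeriod (predf A (σ * zp A σ m)) m ∣ L :=
    h1.minimalPeriod_dvd
  set L' := Function.minimalPeriod (predf A (σ * zp A σ m)) m with hL'
  have h2 : Function.IsPeriodicPt (predf A σ) ((L - 1) * L') m := by
    show (predf A σ)^[(L - 1) * L'] m = m
    rw [← iterate_pred_flip_on hrow2 hsupp hm (self_mem_cyl hm)]
    exact Function.iterate_minimalPeriod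
  have hdvd2 : L ∣ (L - 1) * L' := h2.minimalPeriod_dvd
  have hco : Nat.Coprime L (L - 1) := by
    have h3 : L - 1 + 1 = L := Nat.succ_pred_eq_of_pos (per_pos hm)
    rw [← h3]
    simp [Nat.Coprime, Nat.gcd_comm]
  have : L ∣ L' := hco.dvd_of_dvd_mul_left hdvd2
  exact Nat.dvd_antisymm hdvd1 this

lemma mem_cyl_flip : ∀ i, (i ∈ cyl A (σ * zp A σ m) m ↔ i ∈ cyl A σ m) := by
  have hm' := m_mem_Cyc_flip hrow2 hsupp hm
  have hsub : ∀ i, i ∈ cyl A (σ * zp A σ m) m → i ∈ cyl A σ m := by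
    intro i hi
    obtain ⟨t, rfl⟩ := (mem_cyl_iff hm').1 hi
    rw [iterate_pred_flip_on hrow2 hsupp hm (self_mem_cyl hm)]
    exact iterate_mem_cyl hm (self_mem_cyl hm) _
  have hcard : (cyl A σ m).toFinset.card ≤ (cyl A (σ * zp A σ m) m).toFinset.card := by
    rw [List.toFinset_card_of_nodup (nodup_cyl hm), List.toFinset_card_of_nodup (nodup_cyl hm'),
      length_cyl hm, length_cyl hm', per_flip hrow2 hsupp hm]
  have hsub' : (cyl A (σ * zp A σ m) m).toFinset ⊆ (cyl A σ m).toFinset := by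
    intro i hi
    rw [List.mem_toFinset] at hi ⊢
    exact hsub i hi
  have heq := Finset.eq_of_subset_of_card_le hsub' hcard
  intro i
  rw [← List.mem_toFinset, ← List.mem_toFinset (l := cyl A σ m), heq]

lemma zp_flip : zp A (σ * zp A σ m) m = (zp A σ m)⁻¹ := by
  have hm' := m_mem_Cyc_flip hrow2 hsupp hm
  ext i
  rw [zp_apply hm', zp_symm_apply hm]
  by_cases h : i ∈ cyl A σ m
  · rw [if_pos ((mem_cyl_flip hrow2 hsupp hm i).2 h), if_pos h,
      pred_flip_on hrow2 hsupp hm h]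
  · rw [if_neg (fun hc => h ((mem_cyl_flip hrow2 hsupp hm i).1 hc)), if_neg h]

lemma flip_flip : (σ * zp A σ m) * zp A (σ * zp A σ m) m = σ := by
  rw [zp_flip hrow2 hsupp hm, mul_inv_cancel_right]

lemma Cyc_flip : Cyc A (σ * zp A σ m) = Cyc A σ := by
  apply Set.Subset.antisymm
  · have h1 := mem_Cyc_flip hrow2 (supp_flip hsupp hm) (m_mem_Cyc_flip hrow2 hsupp hm)
    rwa [flip_flip hrow2 hsupp hm] at h1
  · exact mem_Cyc_flip hrow2 hsupp hm

end Flip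

section Weight

variable {n : Type*} [Fintype n] [DecidableEq n]
variable {R : Type*} [CommRing R]
variable {A : Matrix n n R} {σ : Equiv.Perm n} {m : n}

lemma sign_zp (hm : m ∈ Cyc A σ) :
    Equiv.Perm.sign (zp A σ m)
      = -(-1) ^ (Function.minimalPeriod (predf A σ) m) := by
  have hlen : 2 ≤ (cyl A σ m).length := by rw [length_cyl hm]; exact per_ge_two hm
  have hne : ∀ x : n, cyl A σ m ≠ [x] := by
    intro x hx
    rw [hx] at hlen
    simp at hlen
  have hcyc : (zp A σ m).IsCycle := List.isCycle_formPerm (nodup_cyl hm) hlen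
  rw [hcyc.sign]
  rw [zp, List.support_formPerm_of_nodup _ (nodup_cyl hm) hne,
    List.toFinset_card_of_nodup (nodup_cyl hm), length_cyl hm]

lemma prod_flip
    (hopp : ∀ i j j' : n, j ≠ j' → A i j ≠ 0 → A i j' ≠ 0 → A i j' = - A i j)
    (hsupp : ∀ i, A i (σ i) ≠ 0) (hm : m ∈ Cyc A σ) :
    ∏ i, A i ((σ * zp A σ m) i)
      = (-1) ^ (Function.minimalPeriod (predf A σ) m) * ∏ i, A i (σ i) := by
  classical
  set s := (cyl A σ m).toFinset with hs
  have hsplit := Finset.prod_mul_prod_compl s (fun i => A i ((σ * zp A σ m) i))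
  have hsplit2 := Finset.prod_mul_prod_compl s (fun i => A i (σ i))
  have h1 : ∏ i ∈ s, A i ((σ * zp A σ m) i) = ∏ i ∈ s, (- A i (σ i)) := by
    apply Finset.prod_congr rfl
    intro i hi
    rw [hs, List.mem_toFinset] at hi
    rw [Equiv.Perm.mul_apply, zp_apply hm, if_pos hi]
    exact hopp i (σ i) (σ (predf A σ i)) (grel_of_mem_cyl hm hi).1.symm
      (hsupp i) (grel_of_mem_cyl hm hi).2
  have h2 : ∏ i ∈ s, (- A i (σ i)) = (-1 : R) ^ s.card * ∏ i ∈ s, A i (σ i) := by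
    rw [← Finset.prod_const (-1 : R), ← Finset.prod_mul_distrib]
    apply Finset.prod_congr rfl
    intro i _
    ring
  have h3 : ∏ i ∈ sᶜ, A i ((σ * zp A σ m) i) = ∏ i ∈ sᶜ, A i (σ i) := by
    apply Finset.prod_congr rfl
    intro i hi
    rw [Finset.mem_compl, hs, List.mem_toFinset] at hi
    rw [Equiv.Perm.mul_apply, zp_apply hm, if_neg hi]
  have hcard : s.card = Function.minimalPeriod (predf A σ) m := by
    rw [hs, List.toFinset_card_of_nodup (nodup_cyl hm), length_cyl hm]
  rw [← hsplit, ← hsplit2, h1, h2, h3, hcard]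
  ring

lemma weight_flip (hrow2 : ∀ i : n, {j : n | A i j ≠ 0}.ncard ≤ 2)
    (hopp : ∀ i j j' : n, j ≠ j' → A i j ≠ 0 → A i j' ≠ 0 → A i j' = - A i j)
    (hsupp : ∀ i, A i (σ i) ≠ 0) (hm : m ∈ Cyc A σ) :
    ((Equiv.Perm.sign (σ * zp A σ m) : ℤ) : R) * ∏ i, A i ((σ * zp A σ m) i)
      = -(((Equiv.Perm.sign σ : ℤ) : R) * ∏ i, A i (σ i)) := by
  set L := Function.minimalPeriod (predf A σ) m with hL
  have hsgn : ((Equiv.Perm.sign (σ * zp A σ m) : ℤ) : R)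
      = ((Equiv.Perm.sign σ : ℤ) : R) * (-(-1 : R) ^ L) := by
    rw [Equiv.Perm.sign_mul, sign_zp hm, ← hL]
    push_cast
    ring
  rw [hsgn, prod_flip hopp hsupp hm, ← hL]
  have hsq : ((-1 : R) ^ L) * ((-1 : R) ^ L) = 1 := by
    rw [← pow_add]
    exact Even.neg_one_pow ⟨L, rfl⟩
  linear_combination (-(((Equiv.Perm.sign σ : ℤ) : R) * ∏ i, A i (σ i))) * hsq

open Fin.NatCast Fin.CommRing in
lemma cyc_nonempty (hrow2 : ∀ i : n, {j : n | A i j ≠ 0}.ncard ≤ 2)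
    (hsupp : ∀ i, A i (σ i) ≠ 0)
    (hcyc : ∃ k : ℕ, ∃ c : Fin (k + 2) → n, Function.Injective c ∧
      ∀ t : Fin (k + 2), A (c (t + 1)) (σ (c t)) ≠ 0) :
    (Cyc A σ).Nonempty := by
  obtain ⟨k, c, hcinj, hc⟩ := hcyc
  have hgrel : ∀ s : Fin (k + 2), Grel A σ (c s) (c (s - 1)) := by
    intro s
    constructor
    · intro hσ
      have h1 := hcinj (σ.injective hσ)
      have h2 : s - 1 + 1 = s + 1 := by rw [h1]
      rw [sub_add_cancel] at h2
      have h3 : (1 : Fin (k + 2)) = 0 := by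
        have := left_eq_add.mp h2
        exact this
      have := congrArg Fin.val h3
      rw [Fin.val_one] at this
      simp at this
    · have := hc (s - 1)
      rwa [sub_add_cancel] at this
  have hpred : ∀ s : Fin (k + 2), predf A σ (c s) = c (s - 1) :=
    fun s => predf_eq hrow2 (hsupp _) (hgrel s)
  have hiter : ∀ t : ℕ, (predf A σ)^[t] (c 0) = c (-(t : Fin (k + 2))) := by
    intro t
    induction t with
    | zero => simp
    | succ t ih =>
        rw [Function.iterate_succ_apply', ih, hpred]
        congr 1
        push_cast
        ring
  refine ⟨c 0, ⟨k + 2, by omega, ?_⟩, fun t => ?_⟩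
  · rw [hiter]
    congr 1
    rw [Fin.natCast_self]
    simp
  · rw [hiter]
    exact ⟨c (-(t : Fin (k + 2)) - 1), hgrel _⟩

lemma mem_S_flip (hrow2 : ∀ i : n, {j : n | A i j ≠ 0}.ncard ≤ 2)
    (hsupp : ∀ i, A i (σ i) ≠ 0) (hm : m ∈ Cyc A σ) :
    ∃ k : ℕ, ∃ c : Fin (k + 2) → n, Function.Injective c ∧
      ∀ t : Fin (k + 2), A (c (t + 1)) ((σ * zp A σ m) (c t)) ≠ 0 := by
  have h2 := per_ge_two hm
  obtain ⟨k, hk⟩ : ∃ k, k + 2 = Function.minimalPeriod (predf A σ) m :=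
    ⟨Function.minimalPeriod (predf A σ) m - 2, by omega⟩
  refine ⟨k, fun t => (predf A σ)^[t.val] m, ?_, ?_⟩
  · intro t t' h
    refine Fin.ext (Function.iterate_injOn_Iio_minimalPeriod
      (Set.mem_Iio.mpr (by have := t.isLt; omega))
      (Set.mem_Iio.mpr (by have := t'.isLt; omega)) h)
  · intro t
    show A ((predf A σ)^[((t + 1 : Fin (k + 2))).val] m)
      ((σ * zp A σ m) ((predf A σ)^[t.val] m)) ≠ 0
    have e1 : (σ * zp A σ m) ((predf A σ)^[t.val] m)
        = σ ((predf A σ)^[t.val + 1] m) := by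
      rw [Equiv.Perm.mul_apply, zp_apply hm,
        if_pos ((mem_cyl_iff hm).2 ⟨t.val, rfl⟩),
        ← Function.iterate_succ_apply' (predf A σ) t.val m]
    have e2 : ((t + 1 : Fin (k + 2))).val = (t.val + 1) % (k + 2) := by
      rw [Fin.val_add, Fin.val_one]
    have e3 : ∀ v : ℕ, (predf A σ)^[(v + 1) % (k + 2)] m = (predf A σ)^[v + 1] m := by
      intro v
      rw [hk]
      exact Function.iterate_mod_minimalPeriod_eq
    rw [e2, e3 t.val, e1]
    exact hsupp _

end Weight
end CyclicCancel

/-- Under the row hypothesis (each row has at most two nonzero entries, and any two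
nonzero entries in a row are negatives of each other), the signed weights of the
cyclic supported permutations sum to zero. -/
theorem cyclic_matchings_cancel
    (n : Type*) [Fintype n] [DecidableEq n]
    (R : Type*) [CommRing R]
    (A : Matrix n n R)
    (hrow2 : ∀ i : n, {j : n | A i j ≠ 0}.ncard ≤ 2)
    (hopp : ∀ i j j' : n, j ≠ j' → A i j ≠ 0 → A i j' ≠ 0 → A i j' = - A i j) :
    ∑ σ : Equiv.Perm n,
      Set.indicator
        {σ : Equiv.Perm n | (∀ i : n, A i (σ i) ≠ 0) ∧
          ∃ k : ℕ, ∃ c : Fin (k + 2) → n, Function.Injective c ∧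
            ∀ t : Fin (k + 2), A (c (t + 1)) (σ (c t)) ≠ 0}
        (fun σ => ((Equiv.Perm.sign σ : ℤ) : R) * ∏ i : n, A i (σ i)) σ = 0 := by
  classical
  letI : LinearOrder n := LinearOrder.lift' (Fintype.equivFin n) (Fintype.equivFin n).injective
  set S : Set (Equiv.Perm n) :=
    {σ : Equiv.Perm n | (∀ i : n, A i (σ i) ≠ 0) ∧
      ∃ k : ℕ, ∃ c : Fin (k + 2) → n, Function.Injective c ∧
        ∀ t : Fin (k + 2), A (c (t + 1)) (σ (c t)) ≠ 0} with hSdef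
  have hne : ∀ σ : Equiv.Perm n, σ ∈ S → ((CyclicCancel.Cyc A σ).toFinite.toFinset).Nonempty := by
    intro σ hσ
    rw [Set.Finite.toFinset_nonempty]
    exact CyclicCancel.cyc_nonempty hrow2 hσ.1 hσ.2
  set g : Equiv.Perm n → Equiv.Perm n := fun σ =>
    if h : σ ∈ S then
      σ * CyclicCancel.zp A σ (((CyclicCancel.Cyc A σ).toFinite.toFinset).min' (hne σ h))
    else σ with hgdef
  have hgapp : ∀ (τ : Equiv.Perm n) (hτ : τ ∈ S),
      g τ = τ * CyclicCancel.zp A τ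
        (((CyclicCancel.Cyc A τ).toFinite.toFinset).min' (hne τ hτ)) :=
    fun τ hτ => dif_pos hτ
  have hgneg : ∀ τ : Equiv.Perm n, τ ∉ S → g τ = τ := fun τ hτ => dif_neg hτ
  have hmin_mem : ∀ (σ : Equiv.Perm n) (h : σ ∈ S),
      ((CyclicCancel.Cyc A σ).toFinite.toFinset).min' (hne σ h) ∈ CyclicCancel.Cyc A σ := by
    intro σ h
    have := Finset.min'_mem _ (hne σ h)
    rwa [Set.Finite.mem_toFinset] at this
  have hgS : ∀ σ ∈ S, g σ ∈ S := by
    intro σ hσ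
    rw [hgapp σ hσ]
    exact ⟨CyclicCancel.supp_flip hσ.1 (hmin_mem σ hσ),
      CyclicCancel.mem_S_flip hrow2 hσ.1 (hmin_mem σ hσ)⟩
  refine Finset.sum_ninvolution g ?_ ?_ (fun σ => Finset.mem_univ _) ?_
  · -- f σ + f (g σ) = 0
    intro σ
    by_cases hσ : σ ∈ S
    · rw [Set.indicator_of_mem hσ, Set.indicator_of_mem (hgS σ hσ), hgapp σ hσ,
        CyclicCancel.weight_flip hrow2 hopp hσ.1 (hmin_mem σ hσ)]
      ring
    · rw [hgneg σ hσ, Set.indicator_of_notMem hσ]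
      ring
  · -- f σ ≠ 0 → g σ ≠ σ
    intro σ hfσ
    have hσ : σ ∈ S := by
      by_contra h
      rw [Set.indicator_of_notMem h] at hfσ
      exact hfσ rfl
    rw [hgapp σ hσ]
    intro heq
    have hmem := hmin_mem σ hσ
    have hz : CyclicCancel.zp A σ
        (((CyclicCancel.Cyc A σ).toFinite.toFinset).min' (hne σ hσ)) = 1 :=
      mul_left_cancel (heq.trans (mul_one σ).symm)
    have h1 := congrArg (fun p : Equiv.Perm n => p
      (((CyclicCancel.Cyc A σ).toFinite.toFinset).min' (hne σ hσ))) hz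
    simp only [Equiv.Perm.one_apply] at h1
    rw [CyclicCancel.zp_apply hmem, if_pos (CyclicCancel.self_mem_cyl hmem)] at h1
    have h2 := (CyclicCancel.grel_of_mem_cyl hmem (CyclicCancel.self_mem_cyl hmem)).1
    rw [h1] at h2
    exact h2 rfl
  · -- g (g σ) = σ
    intro σ
    by_cases hσ : σ ∈ S
    · have hmem := hmin_mem σ hσ
      have hσ' : g σ ∈ S := hgS σ hσ
      have hCyc : CyclicCancel.Cyc A (g σ) = CyclicCancel.Cyc A σ := by
        rw [hgapp σ hσ]
        exact CyclicCancel.Cyc_flip hrow2 hσ.1 hmem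
      have hfin : (CyclicCancel.Cyc A (g σ)).toFinite.toFinset
          = (CyclicCancel.Cyc A σ).toFinite.toFinset := by
        ext x
        simp [Set.Finite.mem_toFinset, hCyc]
      have hmin' : ((CyclicCancel.Cyc A (g σ)).toFinite.toFinset).min' (hne _ hσ')
          = ((CyclicCancel.Cyc A σ).toFinite.toFinset).min' (hne σ hσ) := by
        simp only [hfin]
      rw [hgapp (g σ) hσ', hmin', hgapp σ hσ]
      exact CyclicCancel.flip_flip hrow2 hσ.1 hmem
    · rw [hgneg σ hσ, hgneg σ hσ]
end

section
/- Let n, R, A satisfy the row hypothesis of the setup, and assume det A ≠ 0. Then there exists a supported permutation σ : Equiv.Perm n that is acyclic (i.e., A i (σ i) ≠ 0 for all i, and there is no k ≥ 2 with an injective c : Fin k → n such that A (c (t+1)) (σ (c t)) ≠ 0 for all t, indices mod k). In other words, the bipartite incidence graph admits an acyclic perfect matching. -/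
open scoped Matrix

private theorem acyclic_aux {R : Type*} [CommRing R] :
    ∀ (N : ℕ) (n : Type*) [Fintype n] [DecidableEq n], Fintype.card n ≤ N →
      ∀ (A : Matrix n n R),
      (∀ i : n, {j : n | A i j ≠ 0}.ncard ≤ 2) →
      (∀ i j j' : n, j ≠ j' → A i j ≠ 0 → A i j' ≠ 0 → A i j' = - A i j) →
      A.det ≠ 0 →
      ∃ σ : Equiv.Perm n, (∀ i : n, A i (σ i) ≠ 0) ∧
        ¬ ∃ k : ℕ, ∃ c : Fin (k + 2) → n, Function.Injective c ∧
            ∀ t : Fin (k + 2), A (c (t + 1)) (σ (c t)) ≠ 0 := by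
  intro N
  induction N with
  | zero =>
    intro n _ _ hcard A _ _ _
    haveI : IsEmpty n := Fintype.card_eq_zero_iff.mp (Nat.le_zero.mp hcard)
    exact ⟨1, fun i => (IsEmpty.false i).elim,
      fun ⟨k, c, _, _⟩ => (IsEmpty.false (c 0)).elim⟩
  | succ N ih =>
    intro n _ _ hcard A hrow2 hopp hdet
    by_cases hne : Nonempty n
    case neg =>
      haveI : IsEmpty n := not_nonempty_iff.mp hne
      exact ⟨1, fun i => (IsEmpty.false i).elim,
        fun ⟨k, c, _, _⟩ => (IsEmpty.false (c 0)).elim⟩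
    by_cases hone : ∃ i0 : n, {j : n | A i0 j ≠ 0}.ncard = 1
    case neg =>
      -- every row has 0 or 2 nonzero entries; row sums vanish, so det = 0
      exfalso
      have hsum : ∀ i, ∑ j, A i j = 0 := by
        intro i
        have h02 : {j : n | A i j ≠ 0}.ncard = 0 ∨ {j : n | A i j ≠ 0}.ncard = 2 := by
          have := hrow2 i
          have := not_exists.mp hone i
          omega
        rcases h02 with h0 | h2
        · have hemp : {j : n | A i j ≠ 0} = ∅ := (Set.ncard_eq_zero (Set.toFinite _)).mp h0
          refine Finset.sum_eq_zero fun j _ => ?_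
          by_contra h
          exact absurd (hemp ▸ h : j ∈ (∅ : Set n)) (Set.notMem_empty j)
        · obtain ⟨a, b, hab, hset⟩ := Set.ncard_eq_two.mp h2
          have ha : A i a ≠ 0 := by
            have : a ∈ {j : n | A i j ≠ 0} := hset ▸ Set.mem_insert a {b}
            exact this
          have hb : A i b ≠ 0 := by
            have : b ∈ {j : n | A i j ≠ 0} := hset ▸ Set.mem_insert_of_mem a rfl
            exact this
          have hz : ∀ x, x ≠ a → x ≠ b → A i x = 0 := by
            intro x hxa hxb
            by_contra h
            have : x ∈ ({a, b} : Set n) := hset ▸ h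
            rcases this with h | h
            exacts [hxa h, hxb h]
          have hsub : ∑ x ∈ ({a, b} : Finset n), A i x = ∑ x, A i x :=
            Finset.sum_subset (Finset.subset_univ _) (by
              intro x _ hx
              simp only [Finset.mem_insert, Finset.mem_singleton, not_or] at hx
              exact hz x hx.1 hx.2)
          rw [← hsub, Finset.sum_pair hab, hopp i a b hab ha hb, add_neg_cancel]
      have hv : A *ᵥ (fun _ => (1 : R)) = 0 := by
        funext i
        simpa [Matrix.mulVec, dotProduct] using hsum i
      have hkey : A.det • (fun _ => (1 : R)) = (0 : n → R) := by
        have h1 : A.adjugate *ᵥ (A *ᵥ fun _ => (1 : R)) = A.det • fun _ => (1 : R) := by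
          rw [Matrix.mulVec_mulVec, Matrix.adjugate_mul, Matrix.smul_mulVec,
            Matrix.one_mulVec]
        rw [hv, Matrix.mulVec_zero] at h1
        exact h1.symm
      obtain ⟨i⟩ := hne
      have := congrFun hkey i
      simp only [Pi.smul_apply, smul_eq_mul, mul_one, Pi.zero_apply] at this
      exact hdet this
    -- main case: row i0 has exactly one nonzero entry
    obtain ⟨i0, h1⟩ := hone
    obtain ⟨j0, hj0⟩ := Set.ncard_eq_one.mp h1
    have hAij : A i0 j0 ≠ 0 := by
      have : j0 ∈ {j : n | A i0 j ≠ 0} := hj0 ▸ rfl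
      exact this
    have huniq : ∀ x, A i0 x ≠ 0 → x = j0 := by
      intro x hx
      have : x ∈ ({j0} : Set n) := hj0 ▸ hx
      exact this
    set τ : Equiv.Perm n := Equiv.swap i0 j0 with hτ
    set m := {a : n // ¬ a = i0} with hm
    set B : Matrix m m R := fun x y => A x.1 (τ y.1) with hB
    -- column images avoid j0
    have hτne : ∀ y : m, τ y.1 ≠ j0 := by
      intro y hy
      have : y.1 = i0 := τ.injective (by rw [hy, hτ, Equiv.swap_apply_left])
      exact y.2 this
    -- determinant of the minor is nonzero
    have hdetB : B.det ≠ 0 := by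
      have hA' : (A.submatrix id τ).det ≠ 0 := by
        rw [Matrix.det_permute']
        rcases Int.units_eq_one_or (Equiv.Perm.sign τ) with h | h <;>
          simp [h, hdet]
      set e : {a : n // a = i0} ⊕ {a : n // ¬ a = i0} ≃ n := Equiv.sumCompl (· = i0) with he
      set M := (A.submatrix id τ).submatrix e e with hM
      have hMdet : M.det = (A.submatrix id τ).det := Matrix.det_submatrix_equiv_self e _
      have h12 : M.toBlocks₁₂ = 0 := by
        ext x y
        have hx : x.1 = i0 := x.2
        show A x.1 (τ y.1) = 0
        rw [hx]
        by_contra h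
        exact hτne y (huniq _ h)
      have hblock : M.det = M.toBlocks₁₁.det * M.toBlocks₂₂.det := by
        conv_lhs => rw [← Matrix.fromBlocks_toBlocks M, h12]
        exact Matrix.det_fromBlocks_zero₁₂ _ _ _
      haveI : Unique {a : n // a = i0} :=
        ⟨⟨⟨i0, rfl⟩⟩, by rintro ⟨x, rfl⟩; rfl⟩
      have hB22 : M.toBlocks₂₂ = B := rfl
      intro hzero
      rw [hB22, hzero, mul_zero] at hblock
      exact hA' (hMdet ▸ hblock)
    -- hypotheses for the minor
    have hφinj : Function.Injective (fun y : m => τ y.1) :=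
      fun a b h => Subtype.ext (τ.injective h)
    have hrow2B : ∀ x : m, {y : m | B x y ≠ 0}.ncard ≤ 2 := by
      intro x
      rw [← Set.ncard_image_of_injective {y : m | B x y ≠ 0} hφinj]
      refine le_trans (Set.ncard_le_ncard ?_ (Set.toFinite _)) (hrow2 x.1)
      rintro _ ⟨y, hy, rfl⟩
      exact hy
    have hoppB : ∀ (x y y' : m), y ≠ y' → B x y ≠ 0 → B x y' ≠ 0 → B x y' = - B x y := by
      intro x y y' hyy' h h'
      exact hopp x.1 (τ y.1) (τ y'.1) (fun hh => hyy' (hφinj hh)) h h'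
    have hcardm : Fintype.card m ≤ N := by
      have h1 : Fintype.card m = Fintype.card n - 1 := by
        simp [hm, Fintype.card_subtype_compl]
      have h2 : 1 ≤ Fintype.card n := Fintype.card_pos_iff.mpr hne
      omega
    obtain ⟨σ', hσ'supp, hσ'ac⟩ := ih m hcardm B hrow2B hoppB hdetB
    -- build the permutation on n
    set σ : Equiv.Perm n := (Equiv.Perm.ofSubtype σ').trans τ with hσ
    have hσi0 : σ i0 = j0 := by
      have : Equiv.Perm.ofSubtype σ' i0 = i0 :=
        Equiv.Perm.ofSubtype_apply_of_not_mem σ' (by simp)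
      simp [hσ, Equiv.trans_apply, this, hτ, Equiv.swap_apply_left]
    have hσne : ∀ (x : n) (hx : ¬ x = i0), σ x = τ ((σ' ⟨x, hx⟩).1) := by
      intro x hx
      simp [hσ, Equiv.trans_apply, Equiv.Perm.ofSubtype_apply_of_mem σ' hx]
    refine ⟨σ, ?_, ?_⟩
    · intro i
      by_cases hi : i = i0
      · rw [hi, hσi0]; exact hAij
      · rw [hσne i hi]
        exact hσ'supp ⟨i, hi⟩
    · rintro ⟨k, c, hcinj, hc⟩
      by_cases hin : ∃ t : Fin (k + 2), c t = i0
      · obtain ⟨t, ht⟩ := hin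
        set s : Fin (k + 2) := t - 1 with hs
        have hst : s + 1 = t := by rw [hs, sub_add_cancel]
        have hcs1 : c (s + 1) = i0 := by rw [hst]; exact ht
        have hAcs : A i0 (σ (c s)) ≠ 0 := by
          have := hc s
          rwa [hcs1] at this
        have hσcs : σ (c s) = j0 := huniq _ hAcs
        have hcsi0 : c s = i0 := σ.injective (by rw [hσcs, hσi0])
        have : s = s + 1 := hcinj (by rw [hcsi0, hcs1])
        have h01 : (0 : Fin (k + 2)) = 1 := by
          have h2 := congrArg (fun x : Fin (k + 2) => x - s) this
          simp only [sub_self, add_sub_cancel_left] at h2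
          exact h2
        have hv2 := congrArg Fin.val h01
        rw [Fin.val_zero, Fin.val_one'] at hv2
        rw [Nat.mod_eq_of_lt (by omega)] at hv2
        exact zero_ne_one hv2
      · push_neg at hin
        set c' : Fin (k + 2) → m := fun t => ⟨c t, hin t⟩ with hc'
        refine hσ'ac ⟨k, c', fun a b hab => hcinj (congrArg Subtype.val hab), ?_⟩
        intro t
        show A (c (t + 1)) (τ ((σ' ⟨c t, hin t⟩).1)) ≠ 0
        rw [← hσne (c t) (hin t)]
        exact hc t

/-- Under the row hypothesis, a matrix with nonzero determinant admits an acyclic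
supported permutation (an acyclic perfect matching of the bipartite incidence graph). -/
theorem exists_acyclic_matching
    (n : Type*) [Fintype n] [DecidableEq n]
    (R : Type*) [CommRing R]
    (A : Matrix n n R)
    (hrow2 : ∀ i : n, {j : n | A i j ≠ 0}.ncard ≤ 2)
    (hopp : ∀ i j j' : n, j ≠ j' → A i j ≠ 0 → A i j' ≠ 0 → A i j' = - A i j)
    (hdet : A.det ≠ 0) :
    ∃ σ : Equiv.Perm n, (∀ i : n, A i (σ i) ≠ 0) ∧
      ¬ ∃ k : ℕ, ∃ c : Fin (k + 2) → n, Function.Injective c ∧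
          ∀ t : Fin (k + 2), A (c (t + 1)) (σ (c t)) ≠ 0 := by
  exact acyclic_aux (Fintype.card n) n le_rfl A hrow2 hopp hdet
end

section
/- Let n, R, A satisfy the row hypothesis of the setup. Then det A equals the sum, over all supported permutations σ : Equiv.Perm n that are acyclic, of the weights Λ(σ) = (sign σ) * ∏ i, A i (σ i). -/
namespace DetAcyclicAux

open Function List Equiv
open scoped Classical
open Fin.NatCast
set_option linter.unusedSectionVars false

variable {n : Type*} [Fintype n] [DecidableEq n] {R : Type*} [CommRing R]

lemma three_distinct {S : Set n} (hS : S.ncard ≤ 2) {a b c : n}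
    (ha : a ∈ S) (hb : b ∈ S) (hc : c ∈ S) (hab : a ≠ b) (hac : a ≠ c) (hbc : b ≠ c) : False := by
  have hsub : ({a, b, c} : Set n) ⊆ S := by
    intro x hx
    simp only [Set.mem_insert_iff, Set.mem_singleton_iff] at hx
    rcases hx with rfl | rfl | rfl <;> assumption
  have h3 : ({a, b, c} : Set n).ncard = 3 := by
    rw [Set.ncard_insert_of_notMem (by simp [hab, hac]),
      Set.ncard_insert_of_notMem (by simp [hbc]), Set.ncard_singleton]
  have := Set.ncard_le_ncard hsub (Set.toFinite S)
  omega

noncomputable def G (A : Matrix n n R) (σ : Equiv.Perm n) (i : n) : n :=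
  if h : ∃ j, j ≠ σ i ∧ A i j ≠ 0 then σ.symm h.choose else i

lemma G_eq_self_iff {A : Matrix n n R} {σ : Equiv.Perm n} {i : n} :
    G A σ i = i ↔ ¬ ∃ j, j ≠ σ i ∧ A i j ≠ 0 := by
  constructor
  · intro hG h
    rw [G, dif_pos h] at hG
    exact h.choose_spec.1 ((Equiv.symm_apply_eq σ).1 hG)
  · intro h; rw [G, dif_neg h]

lemma G_spec {A : Matrix n n R} {σ : Equiv.Perm n} {i : n} (h : G A σ i ≠ i) :
    σ (G A σ i) ≠ σ i ∧ A i (σ (G A σ i)) ≠ 0 := by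
  have hex : ∃ j, j ≠ σ i ∧ A i j ≠ 0 := by
    by_contra hc; exact h (G_eq_self_iff.2 hc)
  rw [G, dif_pos hex]
  simpa using ⟨hex.choose_spec.1, hex.choose_spec.2⟩

lemma G_eq {A : Matrix n n R} (hrow2 : ∀ i, {j | A i j ≠ 0}.ncard ≤ 2)
    {σ : Equiv.Perm n} {i j : n}
    (hs : A i (σ i) ≠ 0) (hj : A i j ≠ 0) (hji : j ≠ σ i) : G A σ i = σ.symm j := by
  have hex : ∃ j', j' ≠ σ i ∧ A i j' ≠ 0 := ⟨j, hji, hj⟩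
  rw [G, dif_pos hex]
  congr 1
  by_contra hne
  exact three_distinct (hrow2 i) hex.choose_spec.2 hj hs hne hex.choose_spec.1 hji

lemma G_ne {A : Matrix n n R} (hrow2 : ∀ i, {j | A i j ≠ 0}.ncard ≤ 2)
    {σ : Equiv.Perm n} {i j : n}
    (hs : A i (σ i) ≠ 0) (hj : A i j ≠ 0) (hji : j ≠ σ i) : G A σ i ≠ i := by
  rw [G_eq hrow2 hs hj hji]
  intro h
  exact hji (by rwa [Equiv.symm_apply_eq] at h)

/-- second entry is negative of the first -/
lemma A_G_neg {A : Matrix n n R}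
    (hopp : ∀ i j j' : n, j ≠ j' → A i j ≠ 0 → A i j' ≠ 0 → A i j' = - A i j)
    {σ : Equiv.Perm n} {i : n} (hs : A i (σ i) ≠ 0) (h : G A σ i ≠ i) :
    A i (σ (G A σ i)) = - A i (σ i) :=
  hopp i (σ i) (σ (G A σ i)) (Ne.symm (G_spec h).1) hs (G_spec h).2


noncomputable def cpF (A : Matrix n n R) (σ : Equiv.Perm n) : Finset n :=
  Finset.univ.filter fun i => i ∈ periodicPts (G A σ) ∧ G A σ i ≠ i

lemma mem_cpF {A : Matrix n n R} {σ : Equiv.Perm n} {i : n} :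
    i ∈ cpF A σ ↔ i ∈ periodicPts (G A σ) ∧ G A σ i ≠ i := by
  classical
  simp [cpF]

/-- generic: a periodic point whose iterate lies in a forward-closed set lies in the set. -/
lemma mem_of_iterate_mem {f : n → n} {S : Set n} (hS : ∀ x ∈ S, f x ∈ S) {i : n}
    (hi : i ∈ periodicPts f) {a : ℕ} (ha : f^[a] i ∈ S) : i ∈ S := by
  obtain ⟨p, hp, hper⟩ := Function.mem_periodicPts.1 hi
  have key : ∀ b : ℕ, ∀ x ∈ S, f^[b] x ∈ S := by
    intro b
    induction b with
    | zero => simpa using fun x hx => hx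
    | succ b ih =>
        intro x hx
        rw [Function.iterate_succ_apply]
        exact ih _ (hS x hx)
  have hle : a ≤ p * (a + 1) := by nlinarith
  have hit : f^[p * (a + 1) - a] (f^[a] i) = i := by
    rw [← Function.iterate_add_apply, Nat.sub_add_cancel hle]
    exact (hper.mul_const (a + 1))
  rw [← hit]
  exact key _ _ ha


lemma iterate_agree {f g : n → n} {S : Set n} (hclosed : ∀ x ∈ S, f x ∈ S)
    (hagree : ∀ x ∈ S, g x = f x) (a : ℕ) {x : n} (hx : x ∈ S) :
    g^[a] x = f^[a] x ∧ f^[a] x ∈ S := by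
  induction a with
  | zero => exact ⟨rfl, hx⟩
  | succ a ih =>
      rw [iterate_succ_apply', iterate_succ_apply', ih.1]
      exact ⟨hagree _ ih.2, hclosed _ ih.2⟩

lemma min'_eq_of_eq {s t : Finset n} [LinearOrder n] (hst : s = t) (hs : s.Nonempty)
    (ht : t.Nonempty) : s.min' hs = t.min' ht := by subst hst; rfl

lemma cpF_nonempty_of_cyc {A : Matrix n n R} (hrow2 : ∀ i : n, {j : n | A i j ≠ 0}.ncard ≤ 2)
    {σ : Equiv.Perm n} (hσ : ∀ i, A i (σ i) ≠ 0)
    (hc : ∃ k : ℕ, ∃ c : Fin (k + 2) → n, Function.Injective c ∧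
      ∀ t : Fin (k + 2), A (c (t + 1)) (σ (c t)) ≠ 0) :
    (cpF A σ).Nonempty := by
  obtain ⟨k, c, hinj, hedge⟩ := hc
  have hone : ((1 : Fin (k + 2)) : ℕ) = 1 := rfl
  have hGc : ∀ t : Fin (k + 2), G A σ (c (t + 1)) = c t := by
    intro t
    have hne : σ (c t) ≠ σ (c (t + 1)) := by
      intro e
      have ht : t = t + 1 := hinj (σ.injective e)
      have e1 : (0 : Fin (k + 2)) = 1 := by
        have : t + 0 = t + 1 := by rw [add_zero, ← ht]
        exact add_left_cancel this
      have := congrArg Fin.val e1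
      simp [hone] at this
    have := G_eq hrow2 (hσ (c (t + 1))) (hedge t) hne
    rw [this, Equiv.symm_apply_apply]
  have hiter : ∀ a : ℕ, (G A σ)^[a] (c 0) = c (-(a : Fin (k + 2))) := by
    intro a
    induction a with
    | zero => simp
    | succ a ih =>
        rw [Function.iterate_succ_apply', ih]
        have key := hGc (-(a : Fin (k + 2)) - 1)
        rw [sub_add_cancel] at key
        rw [key]
        congr 1
        push_cast
        exact (neg_add' _ _).symm
  have hne1 : c (-1 : Fin (k + 2)) ≠ c 0 := by
    intro e
    have := hinj e
    have := congrArg Fin.val (neg_eq_zero.1 this)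
    simp [hone] at this
  refine ⟨c 0, mem_cpF.2 ⟨?_, ?_⟩⟩
  · refine mk_mem_periodicPts (n := k + 2) (by omega) ?_
    show (G A σ)^[k + 2] (c 0) = c 0
    rw [hiter (k + 2)]
    congr 1
    simp
  · have key := hGc (-1)
    rw [neg_add_cancel] at key
    rw [key]
    exact hne1

section Orbit

variable [LinearOrder n]
variable (A : Matrix n n R) (σ : Equiv.Perm n) (h : (cpF A σ).Nonempty)

noncomputable def i0 : n := (cpF A σ).min' h

lemma i0_mem : i0 A σ h ∈ cpF A σ := Finset.min'_mem _ _

lemma i0_periodic : i0 A σ h ∈ periodicPts (G A σ) := (mem_cpF.1 (i0_mem A σ h)).1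

lemma G_i0_ne : G A σ (i0 A σ h) ≠ i0 A σ h := (mem_cpF.1 (i0_mem A σ h)).2

noncomputable def mP : ℕ := minimalPeriod (G A σ) (i0 A σ h)

lemma mP_pos : 0 < mP A σ h := minimalPeriod_pos_of_mem_periodicPts (i0_periodic A σ h)

lemma two_le_mP : 2 ≤ mP A σ h := by
  have h1 := mP_pos A σ h
  have h2 : mP A σ h ≠ 1 := fun e =>
    G_i0_ne A σ h (minimalPeriod_eq_one_iff_isFixedPt.1 e)
  omega

noncomputable def LL : List n := (List.range (mP A σ h)).map fun a => (G A σ)^[a] (i0 A σ h)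

lemma length_LL : (LL A σ h).length = mP A σ h := by simp [LL]

lemma nodup_LL : (LL A σ h).Nodup := by
  refine List.Nodup.map_on ?_ List.nodup_range
  intro x hx y hy hxy
  exact iterate_injOn_Iio_minimalPeriod (by simpa [mP] using hx) (by simpa [mP] using hy) hxy

lemma iterate_mP_i0 : (G A σ)^[mP A σ h] (i0 A σ h) = i0 A σ h :=
  Function.iterate_minimalPeriod

lemma iterate_mod_mP (b : ℕ) :
    (G A σ)^[b % mP A σ h] (i0 A σ h) = (G A σ)^[b] (i0 A σ h) :=
  Function.iterate_mod_minimalPeriod_eq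

lemma mem_LL {x : n} : x ∈ LL A σ h ↔ ∃ a < mP A σ h, x = (G A σ)^[a] (i0 A σ h) := by
  simp [LL]

lemma iterate_mem_LL (a : ℕ) : (G A σ)^[a] (i0 A σ h) ∈ LL A σ h :=
  (mem_LL A σ h).2 ⟨a % mP A σ h, Nat.mod_lt _ (mP_pos A σ h),
    (iterate_mod_mP A σ h a).symm⟩

lemma i0_mem_LL : i0 A σ h ∈ LL A σ h := iterate_mem_LL A σ h 0

lemma G_mem_LL {x : n} (hx : x ∈ LL A σ h) : G A σ x ∈ LL A σ h := by
  obtain ⟨a, _, rfl⟩ := (mem_LL A σ h).1 hx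
  have e : G A σ ((G A σ)^[a] (i0 A σ h)) = (G A σ)^[a + 1] (i0 A σ h) :=
    (Function.iterate_succ_apply' _ _ _).symm
  rw [e]
  exact iterate_mem_LL A σ h (a + 1)

lemma iterate_LL_periodic {x : n} (hx : x ∈ LL A σ h) :
    (G A σ)^[mP A σ h] x = x := by
  obtain ⟨a, _, rfl⟩ := (mem_LL A σ h).1 hx
  rw [← Function.iterate_add_apply, add_comm, Function.iterate_add_apply,
    iterate_mP_i0]

lemma G_ne_self_of_mem_LL {x : n} (hx : x ∈ LL A σ h) : G A σ x ≠ x := by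
  intro hfix
  obtain ⟨a, ha, rfl⟩ := (mem_LL A σ h).1 hx
  have h1 : (G A σ)^[mP A σ h - a] ((G A σ)^[a] (i0 A σ h)) = i0 A σ h := by
    rw [← Function.iterate_add_apply, Nat.sub_add_cancel ha.le]
    exact iterate_mP_i0 A σ h
  have h2 : (G A σ)^[mP A σ h - a] ((G A σ)^[a] (i0 A σ h)) = (G A σ)^[a] (i0 A σ h) :=
    Function.IsFixedPt.iterate hfix _
  have h3 : (G A σ)^[a] (i0 A σ h) = i0 A σ h := h2.symm.trans h1
  exact G_i0_ne A σ h (by rw [h3] at hfix; exact hfix)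

lemma LL_subset_cpF {x : n} (hx : x ∈ LL A σ h) : x ∈ cpF A σ :=
  mem_cpF.2 ⟨mk_mem_periodicPts (mP_pos A σ h) (iterate_LL_periodic A σ h hx),
    G_ne_self_of_mem_LL A σ h hx⟩

noncomputable def rho : Equiv.Perm n := (LL A σ h).formPerm

lemma rho_apply_of_not_mem {x : n} (hx : x ∉ LL A σ h) : rho A σ h x = x :=
  List.formPerm_apply_of_notMem hx

lemma LL_getElem (a : ℕ) (ha : a < (LL A σ h).length) :
    (LL A σ h)[a] = (G A σ)^[a] (i0 A σ h) := by
  simp [LL]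

lemma rho_apply_of_mem {x : n} (hx : x ∈ LL A σ h) : rho A σ h x = G A σ x := by
  obtain ⟨a, ha, rfl⟩ := (mem_LL A σ h).1 hx
  have ha' : a < (LL A σ h).length := by rwa [length_LL]
  have key := List.formPerm_apply_getElem (LL A σ h) (nodup_LL A σ h) a ha'
  rw [LL_getElem, LL_getElem, length_LL] at key
  rw [rho, key, iterate_mod_mP, Function.iterate_succ_apply']

lemma rho_mem_LL {x : n} (hx : x ∈ LL A σ h) : rho A σ h x ∈ LL A σ h :=
  List.formPerm_apply_mem_of_mem hx

lemma rho_inv_apply_of_not_mem {x : n} (hx : x ∉ LL A σ h) : (rho A σ h)⁻¹ x = x := by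
  have := rho_apply_of_not_mem A σ h hx
  nth_rewrite 1 [← this]
  exact Equiv.symm_apply_apply _ _

lemma rho_inv_mem_LL {x : n} (hx : x ∈ LL A σ h) : (rho A σ h)⁻¹ x ∈ LL A σ h := by
  by_contra hc
  have h1 : rho A σ h ((rho A σ h)⁻¹ x) = (rho A σ h)⁻¹ x :=
    rho_apply_of_not_mem A σ h hc
  rw [show rho A σ h ((rho A σ h)⁻¹ x) = x from Equiv.apply_symm_apply _ _] at h1
  rw [← h1] at hc
  exact hc hx

lemma rho_ne_of_mem {x : n} (hx : x ∈ LL A σ h) : rho A σ h x ≠ x := by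
  rw [rho_apply_of_mem A σ h hx]
  exact G_ne_self_of_mem_LL A σ h hx

lemma rho_inv_ne_of_mem {x : n} (hx : x ∈ LL A σ h) : (rho A σ h)⁻¹ x ≠ x := by
  intro hc
  have : rho A σ h x = x := by nth_rewrite 1 [← hc]; exact Equiv.apply_symm_apply _ _
  exact rho_ne_of_mem A σ h hx this

lemma LL_ne_single (x : n) : LL A σ h ≠ [x] := by
  intro e
  have hlen := length_LL A σ h
  rw [e] at hlen
  have h2 := two_le_mP A σ h
  simp at hlen
  omega

lemma support_rho : (rho A σ h).support = (LL A σ h).toFinset :=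
  List.support_formPerm_of_nodup _ (nodup_LL A σ h) (LL_ne_single A σ h)

lemma isCycle_rho : Equiv.Perm.IsCycle (rho A σ h) :=
  List.isCycle_formPerm (nodup_LL A σ h) (by rw [length_LL]; exact two_le_mP A σ h)

lemma sign_rho : Equiv.Perm.sign (rho A σ h) = -(-1) ^ (mP A σ h) := by
  rw [(isCycle_rho A σ h).sign, support_rho,
    List.toFinset_card_of_nodup (nodup_LL A σ h), length_LL]

lemma rho_pow_eq_one : (rho A σ h) ^ (mP A σ h) = 1 := by
  ext x
  by_cases hx : x ∈ LL A σ h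
  · have agree := iterate_agree (f := G A σ) (g := ⇑(rho A σ h))
      (S := {y | y ∈ LL A σ h}) (fun y hy => G_mem_LL A σ h hy)
      (fun y hy => rho_apply_of_mem A σ h hy) (mP A σ h) hx
    have : (⇑(rho A σ h))^[mP A σ h] x = x := by
      rw [agree.1]; exact iterate_LL_periodic A σ h hx
    rw [Equiv.Perm.iterate_eq_pow] at this
    simpa using this
  · have : (⇑(rho A σ h))^[mP A σ h] x = x := by
      have fix : ∀ a : ℕ, (⇑(rho A σ h))^[a] x = x := by
        intro a
        induction a with
        | zero => rfl
        | succ a ih => rw [iterate_succ_apply', ih, rho_apply_of_not_mem A σ h hx]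
      exact fix _
    rw [Equiv.Perm.iterate_eq_pow] at this
    simpa using this

lemma rho_ne_one : rho A σ h ≠ 1 := by
  intro e
  have := rho_ne_of_mem A σ h (i0_mem_LL A σ h)
  rw [e] at this
  simp at this

section Iota

variable (hrow2 : ∀ i : n, {j : n | A i j ≠ 0}.ncard ≤ 2)
variable (hopp : ∀ i j j' : n, j ≠ j' → A i j ≠ 0 → A i j' ≠ 0 → A i j' = - A i j)
variable (hσ : ∀ i : n, A i (σ i) ≠ 0)

noncomputable def iota : Equiv.Perm n := σ * rho A σ h

lemma iota_apply (x : n) : iota A σ h x = σ (rho A σ h x) := rfl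

lemma iota_apply_mem {x : n} (hx : x ∈ LL A σ h) : iota A σ h x = σ (G A σ x) := by
  rw [iota_apply, rho_apply_of_mem A σ h hx]

lemma iota_apply_not_mem {x : n} (hx : x ∉ LL A σ h) : iota A σ h x = σ x := by
  rw [iota_apply, rho_apply_of_not_mem A σ h hx]

include hrow2 hopp hσ

lemma A_iota_mem {x : n} (hx : x ∈ LL A σ h) :
    A x (iota A σ h x) = - A x (σ x) := by
  rw [iota_apply_mem A σ h hx]
  exact A_G_neg hopp (hσ x) (G_ne_self_of_mem_LL A σ h hx)

lemma sup_iota : ∀ i : n, A i (iota A σ h i) ≠ 0 := by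
  intro i
  by_cases hi : i ∈ LL A σ h
  · rw [A_iota_mem A σ h hrow2 hopp hσ hi]
    exact neg_ne_zero.2 (hσ i)
  · rw [iota_apply_not_mem A σ h hi]
    exact hσ i

lemma G_iota_mem {x : n} (hx : x ∈ LL A σ h) :
    G A (iota A σ h) x = (rho A σ h)⁻¹ x := by
  have hGx := G_ne_self_of_mem_LL A σ h hx
  have hs' : A x (iota A σ h x) ≠ 0 := sup_iota A σ h hrow2 hopp hσ x
  have hne : σ x ≠ iota A σ h x := by
    rw [iota_apply_mem A σ h hx]
    exact fun e => hGx (σ.injective e).symm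
  have := G_eq hrow2 hs' (hσ x) hne
  rw [this, Equiv.symm_apply_eq, iota_apply, Equiv.Perm.inv_def, Equiv.apply_symm_apply]

lemma G_iota_not_mem_fix {x : n} (hx : x ∉ LL A σ h) (hGx : G A σ x = x) :
    G A (iota A σ h) x = x := by
  rw [G_eq_self_iff] at hGx ⊢
  rwa [iota_apply_not_mem A σ h hx]

lemma G_iota_not_mem {x : n} (hx : x ∉ LL A σ h) (hGx : G A σ x ≠ x) :
    G A (iota A σ h) x = (rho A σ h)⁻¹ (G A σ x) := by
  have hspec := G_spec hGx
  have hs' : A x (iota A σ h x) ≠ 0 := sup_iota A σ h hrow2 hopp hσ x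
  have hne : σ (G A σ x) ≠ iota A σ h x := by
    rw [iota_apply_not_mem A σ h hx]
    exact hspec.1
  have := G_eq hrow2 hs' hspec.2 hne
  rw [this, Equiv.symm_apply_eq, iota_apply, Equiv.Perm.inv_def, Equiv.apply_symm_apply]

lemma step1 {x : n} (hx : x ∉ LL A σ h) (hfx : G A σ x ∉ LL A σ h) :
    G A (iota A σ h) x = G A σ x := by
  by_cases hGx : G A σ x = x
  · rw [G_iota_not_mem_fix A σ h hrow2 hopp hσ hx hGx, hGx]
  · rw [G_iota_not_mem A σ h hrow2 hopp hσ hx hGx,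
      rho_inv_apply_of_not_mem A σ h hfx]

lemma step2 {x : n} (hx : x ∉ LL A σ h) (hfx : G A (iota A σ h) x ∉ LL A σ h) :
    G A (iota A σ h) x = G A σ x := by
  by_cases hGx : G A σ x = x
  · rw [G_iota_not_mem_fix A σ h hrow2 hopp hσ hx hGx, hGx]
  · rw [G_iota_not_mem A σ h hrow2 hopp hσ hx hGx]
    have hGm : G A σ x ∉ LL A σ h := by
      intro hmem
      apply hfx
      rw [G_iota_not_mem A σ h hrow2 hopp hσ hx hGx]
      exact rho_inv_mem_LL A σ h hmem
    exact rho_inv_apply_of_not_mem A σ h hGm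

lemma cpF_iota : cpF A (iota A σ h) = cpF A σ := by
  ext i
  simp only [mem_cpF]
  constructor
  · rintro ⟨hper, hne⟩
    by_cases hiL : i ∈ LL A σ h
    · exact (mem_cpF.1 (LL_subset_cpF A σ h hiL))
    · -- orbit of i under G A (iota) avoids LL
      have hclosed' : ∀ x ∈ {y | y ∈ LL A σ h}, G A (iota A σ h) x ∈ {y | y ∈ LL A σ h} := by
        intro x hxm
        rw [G_iota_mem A σ h hrow2 hopp hσ hxm]
        exact rho_inv_mem_LL A σ h hxm
      have horb : ∀ a : ℕ, (G A (iota A σ h))^[a] i ∉ LL A σ h := by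
        intro a hmem
        exact hiL (mem_of_iterate_mem hclosed' hper hmem)
      set S : Set n := {y | ∃ a : ℕ, (G A (iota A σ h))^[a] i = y} with hS
      have hSclosed : ∀ x ∈ S, G A (iota A σ h) x ∈ S := by
        rintro x ⟨a, rfl⟩
        exact ⟨a + 1, (Function.iterate_succ_apply' _ _ _)⟩
      have hSagree : ∀ x ∈ S, G A σ x = G A (iota A σ h) x := by
        rintro x ⟨a, rfl⟩
        have h1 : (G A (iota A σ h))^[a] i ∉ LL A σ h := horb a
        have h2 : G A (iota A σ h) ((G A (iota A σ h))^[a] i) ∉ LL A σ h := by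
          have := horb (a + 1)
          rwa [Function.iterate_succ_apply'] at this
        exact (step2 A σ h hrow2 hopp hσ h1 h2).symm
      have hiS : i ∈ S := ⟨0, rfl⟩
      obtain ⟨p, hp, hper'⟩ := Function.mem_periodicPts.1 hper
      have hagree := iterate_agree hSclosed hSagree p hiS
      constructor
      · exact mk_mem_periodicPts hp (by rw [Function.IsPeriodicPt, Function.IsFixedPt, hagree.1]; exact hper')
      · have := (iterate_agree hSclosed hSagree 1 hiS).1
        simp only [Function.iterate_one] at this
        rw [this]
        exact hne
  · rintro ⟨hper, hne⟩
    by_cases hiL : i ∈ LL A σ h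
    · -- i is a cycle point of iota as well
      have hclosed : ∀ x ∈ {y | y ∈ LL A σ h}, (fun y => (rho A σ h)⁻¹ y) x ∈ {y | y ∈ LL A σ h} :=
        fun x hxm => rho_inv_mem_LL A σ h hxm
      have hagree : ∀ x ∈ {y | y ∈ LL A σ h}, G A (iota A σ h) x = (fun y => (rho A σ h)⁻¹ y) x :=
        fun x hxm => G_iota_mem A σ h hrow2 hopp hσ hxm
      have key := iterate_agree hclosed hagree (mP A σ h) hiL
      have hit : (G A (iota A σ h))^[mP A σ h] i = i := by
        rw [key.1]
        have : (fun y => (rho A σ h)⁻¹ y)^[mP A σ h] i = ((rho A σ h)⁻¹ ^ (mP A σ h)) i := by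
          rw [← Equiv.Perm.iterate_eq_pow]
        rw [this, inv_pow, rho_pow_eq_one A σ h]
        simp
      constructor
      · exact mk_mem_periodicPts (mP_pos A σ h) hit
      · rw [G_iota_mem A σ h hrow2 hopp hσ hiL]
        exact rho_inv_ne_of_mem A σ h hiL
    · have hclosed : ∀ x ∈ {y | y ∈ LL A σ h}, G A σ x ∈ {y | y ∈ LL A σ h} :=
        fun x hxm => G_mem_LL A σ h hxm
      have horb : ∀ a : ℕ, (G A σ)^[a] i ∉ LL A σ h := by
        intro a hmem
        exact hiL (mem_of_iterate_mem hclosed hper hmem)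
      set S : Set n := {y | ∃ a : ℕ, (G A σ)^[a] i = y} with hS
      have hSclosed : ∀ x ∈ S, G A σ x ∈ S := by
        rintro x ⟨a, rfl⟩
        exact ⟨a + 1, (Function.iterate_succ_apply' _ _ _)⟩
      have hSagree : ∀ x ∈ S, G A (iota A σ h) x = G A σ x := by
        rintro x ⟨a, rfl⟩
        have h1 : (G A σ)^[a] i ∉ LL A σ h := horb a
        have h2 : G A σ ((G A σ)^[a] i) ∉ LL A σ h := by
          have := horb (a + 1)
          rwa [Function.iterate_succ_apply'] at this
        exact step1 A σ h hrow2 hopp hσ h1 h2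
      have hiS : i ∈ S := ⟨0, rfl⟩
      obtain ⟨p, hp, hper'⟩ := Function.mem_periodicPts.1 hper
      have hagree := iterate_agree hSclosed hSagree p hiS
      constructor
      · exact mk_mem_periodicPts hp (by rw [Function.IsPeriodicPt, Function.IsFixedPt, hagree.1]; exact hper')
      · have := (iterate_agree hSclosed hSagree 1 hiS).1
        simp only [Function.iterate_one] at this
        rw [this]
        exact hne

lemma cpF_iota_nonempty : (cpF A (iota A σ h)).Nonempty := by
  rw [cpF_iota A σ h hrow2 hopp hσ]; exact h

lemma i0_iota :
    i0 A (iota A σ h) (cpF_iota_nonempty A σ h hrow2 hopp hσ) = i0 A σ h :=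
  min'_eq_of_eq (cpF_iota A σ h hrow2 hopp hσ) _ _

lemma mem_LL_iota {x : n} :
    x ∈ LL A (iota A σ h) (cpF_iota_nonempty A σ h hrow2 hopp hσ) ↔ x ∈ LL A σ h := by
  have h' := cpF_iota_nonempty A σ h hrow2 hopp hσ
  have hi0 : i0 A (iota A σ h) h' = i0 A σ h := i0_iota A σ h hrow2 hopp hσ
  constructor
  · intro hx
    obtain ⟨a, ha, rfl⟩ := (mem_LL A _ h').1 hx
    rw [hi0]
    have key := iterate_agree (f := fun y => (rho A σ h)⁻¹ y) (g := G A (iota A σ h))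
      (S := {y | y ∈ LL A σ h}) (fun y hy => rho_inv_mem_LL A σ h hy)
      (fun y hy => G_iota_mem A σ h hrow2 hopp hσ hy) a (i0_mem_LL A σ h)
    rw [key.1]
    exact key.2
  · intro hx
    obtain ⟨a, ha, rfl⟩ := (mem_LL A σ h).1 hx
    have hρ := iterate_agree (f := G A σ) (g := ⇑(rho A σ h)) (S := {y | y ∈ LL A σ h})
      (fun y hy => G_mem_LL A σ h hy) (fun y hy => rho_apply_of_mem A σ h hy)
      a (i0_mem_LL A σ h)
    have hpow : (G A σ)^[a] (i0 A σ h) = ((rho A σ h) ^ a) (i0 A σ h) := by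
      rw [← hρ.1, Equiv.Perm.iterate_eq_pow]
    have hfac : (rho A σ h) ^ a = ((rho A σ h)⁻¹) ^ (mP A σ h - a) := by
      rw [inv_pow, eq_inv_iff_mul_eq_one, ← pow_add,
        Nat.add_sub_cancel' ha.le, rho_pow_eq_one]
    have hinv := iterate_agree (f := fun y => (rho A σ h)⁻¹ y) (g := G A (iota A σ h))
      (S := {y | y ∈ LL A σ h}) (fun y hy => rho_inv_mem_LL A σ h hy)
      (fun y hy => G_iota_mem A σ h hrow2 hopp hσ hy) (mP A σ h - a) (i0_mem_LL A σ h)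
    have hfin : (G A σ)^[a] (i0 A σ h)
        = (G A (iota A σ h))^[mP A σ h - a] (i0 A (iota A σ h) h') := by
      rw [hpow, hfac, hi0, hinv.1, ← Equiv.Perm.iterate_eq_pow]
    rw [hfin]
    exact iterate_mem_LL A (iota A σ h) h' _

lemma rho_iota :
    rho A (iota A σ h) (cpF_iota_nonempty A σ h hrow2 hopp hσ) = (rho A σ h)⁻¹ := by
  ext x
  by_cases hx : x ∈ LL A σ h
  · rw [rho_apply_of_mem A _ _ ((mem_LL_iota A σ h hrow2 hopp hσ).2 hx)]
    exact G_iota_mem A σ h hrow2 hopp hσ hx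
  · rw [rho_apply_of_not_mem A _ _ (fun hc => hx ((mem_LL_iota A σ h hrow2 hopp hσ).1 hc)),
      rho_inv_apply_of_not_mem A σ h hx]

lemma iota_iota :
    iota A (iota A σ h) (cpF_iota_nonempty A σ h hrow2 hopp hσ) = σ := by
  rw [iota, rho_iota A σ h hrow2 hopp hσ, iota, mul_inv_cancel_right]

lemma iota_ne : iota A σ h ≠ σ := by
  intro e
  apply rho_ne_one A σ h
  have : σ * rho A σ h = σ * 1 := by rw [mul_one]; exact e
  exact mul_left_cancel this

lemma cyc_iota : ∃ k : ℕ, ∃ c : Fin (k + 2) → n, Function.Injective c ∧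
    ∀ t : Fin (k + 2), A (c (t + 1)) ((iota A σ h) (c t)) ≠ 0 := by
  have h2 := two_le_mP A σ h
  have hm : mP A σ h - 2 + 2 = mP A σ h := by omega
  refine ⟨mP A σ h - 2, fun t => (G A σ)^[t.val] (i0 A σ h), ?_, ?_⟩
  · intro s t hst
    apply Fin.ext
    refine iterate_injOn_Iio_minimalPeriod ?_ ?_ hst
    · have hs := s.isLt
      have hmp : minimalPeriod (G A σ) (i0 A σ h) = mP A σ h := rfl
      exact Set.mem_Iio.2 (by omega)
    · have hs := t.isLt
      have hmp : minimalPeriod (G A σ) (i0 A σ h) = mP A σ h := rfl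
      exact Set.mem_Iio.2 (by omega)
  · intro t
    have hmem : (G A σ)^[t.val] (i0 A σ h) ∈ LL A σ h := iterate_mem_LL A σ h _
    rw [iota_apply_mem A σ h hmem]
    have hstep : G A σ ((G A σ)^[t.val] (i0 A σ h))
        = (G A σ)^[((t + 1 : Fin (mP A σ h - 2 + 2))).val] (i0 A σ h) := by
      have hv : ((t + 1 : Fin (mP A σ h - 2 + 2))).val
          = (t.val + 1) % (mP A σ h - 2 + 2) := by
        rw [Fin.val_add, Fin.val_one]
      rw [hv]
      generalize (t : ℕ) = v
      rw [hm, iterate_mod_mP, Function.iterate_succ_apply']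
    rw [hstep]
    exact hσ _

lemma prod_iota :
    ∏ i : n, A i (iota A σ h i) = (-1) ^ (mP A σ h) * ∏ i : n, A i (σ i) := by
  rw [← Finset.prod_mul_prod_compl (LL A σ h).toFinset (fun i => A i (iota A σ h i)),
    ← Finset.prod_mul_prod_compl (LL A σ h).toFinset (fun i => A i (σ i))]
  have h1 : ∏ i ∈ (LL A σ h).toFinset, A i (iota A σ h i)
      = (-1) ^ (mP A σ h) * ∏ i ∈ (LL A σ h).toFinset, A i (σ i) := by
    have he : ∀ i ∈ (LL A σ h).toFinset, A i (iota A σ h i) = (-1) * A i (σ i) := by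
      intro i hi
      rw [A_iota_mem A σ h hrow2 hopp hσ (List.mem_toFinset.1 hi)]
      ring
    rw [Finset.prod_congr rfl he, Finset.prod_mul_distrib, Finset.prod_const,
      List.toFinset_card_of_nodup (nodup_LL A σ h), length_LL]
  have h2 : ∏ i ∈ (LL A σ h).toFinsetᶜ, A i (iota A σ h i)
      = ∏ i ∈ (LL A σ h).toFinsetᶜ, A i (σ i) :=
    Finset.prod_congr rfl fun i hi => by
      rw [iota_apply_not_mem A σ h
        (fun hc => (Finset.mem_compl.1 hi) (List.mem_toFinset.2 hc))]
  rw [h1, h2]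
  ring

lemma weight_iota :
    ((Equiv.Perm.sign (iota A σ h) : ℤ) : R) * ∏ i : n, A i (iota A σ h i)
      = - (((Equiv.Perm.sign σ : ℤ) : R) * ∏ i : n, A i (σ i)) := by
  have hs : Equiv.Perm.sign (iota A σ h) = Equiv.Perm.sign σ * (-(-1) ^ (mP A σ h)) := by
    rw [iota, map_mul, sign_rho]
  have key : ((-1 : R) ^ mP A σ h) * ((-1 : R) ^ mP A σ h) = 1 := by
    rw [← pow_add]
    exact Even.neg_one_pow ⟨mP A σ h, rfl⟩
  rw [hs, prod_iota A σ h hrow2 hopp hσ]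
  push_cast
  linear_combination (-(((Equiv.Perm.sign σ : ℤ) : R)) * ∏ i : n, A i (σ i)) * key

end Iota

end Orbit

end DetAcyclicAux

open DetAcyclicAux in
/-- Under the row hypothesis, the determinant equals the sum of the signed weights of
the acyclic supported permutations. -/
theorem det_eq_sum_acyclic_matchings
    (n : Type*) [Fintype n] [DecidableEq n]
    (R : Type*) [CommRing R]
    (A : Matrix n n R)
    (hrow2 : ∀ i : n, {j : n | A i j ≠ 0}.ncard ≤ 2)
    (hopp : ∀ i j j' : n, j ≠ j' → A i j ≠ 0 → A i j' ≠ 0 → A i j' = - A i j) :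
    A.det = ∑ σ : Equiv.Perm n,
      Set.indicator
        {σ : Equiv.Perm n | (∀ i : n, A i (σ i) ≠ 0) ∧
          ¬ ∃ k : ℕ, ∃ c : Fin (k + 2) → n, Function.Injective c ∧
              ∀ t : Fin (k + 2), A (c (t + 1)) (σ (c t)) ≠ 0}
        (fun σ => ((Equiv.Perm.sign σ : ℤ) : R) * ∏ i : n, A i (σ i)) σ := by
  classical
  letI : LinearOrder n := LinearOrder.lift' (fun x => (Fintype.equivFin n) x)
    (Equiv.injective _)
  set W : Equiv.Perm n → R := fun σ => ((Equiv.Perm.sign σ : ℤ) : R) * ∏ i : n, A i (σ i)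
    with hW
  set Cyc : Equiv.Perm n → Prop := fun σ => ∃ k : ℕ, ∃ c : Fin (k + 2) → n,
    Function.Injective c ∧ ∀ t : Fin (k + 2), A (c (t + 1)) (σ (c t)) ≠ 0 with hCyc
  have hdet : A.det = ∑ σ : Equiv.Perm n, W σ := by
    rw [← Matrix.det_transpose, Matrix.det_apply']
    refine Finset.sum_congr rfl fun σ _ => ?_
    simp [Matrix.transpose_apply, hW]
  have hW0 : ∀ σ : Equiv.Perm n, ¬ (∀ i, A i (σ i) ≠ 0) → W σ = 0 := by
    intro σ hns
    push_neg at hns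
    obtain ⟨i, hi⟩ := hns
    rw [hW]
    simp only
    rw [Finset.prod_eq_zero (Finset.mem_univ i) hi, mul_zero]
  have hcyc0 : ∑ σ ∈ Finset.univ.filter (fun σ => (∀ i, A i (σ i) ≠ 0) ∧ Cyc σ), W σ = 0 := by
    refine Finset.sum_involution
      (fun σ hmem => iota A σ (cpF_nonempty_of_cyc hrow2 (Finset.mem_filter.1 hmem).2.1
        (Finset.mem_filter.1 hmem).2.2)) ?_ ?_ ?_ ?_
    · intro σ hmem
      have hσ := (Finset.mem_filter.1 hmem).2.1
      have hc := (Finset.mem_filter.1 hmem).2.2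
      have := weight_iota A σ (cpF_nonempty_of_cyc hrow2 hσ hc) hrow2 hopp hσ
      rw [hW]
      simp only
      rw [this]
      ring
    · intro σ hmem _
      have hσ := (Finset.mem_filter.1 hmem).2.1
      have hc := (Finset.mem_filter.1 hmem).2.2
      exact iota_ne A σ (cpF_nonempty_of_cyc hrow2 hσ hc) hrow2 hopp hσ
    · intro σ hmem
      have hσ := (Finset.mem_filter.1 hmem).2.1
      have hc := (Finset.mem_filter.1 hmem).2.2
      rw [Finset.mem_filter]
      exact ⟨Finset.mem_univ _,
        sup_iota A σ (cpF_nonempty_of_cyc hrow2 hσ hc) hrow2 hopp hσ,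
        cyc_iota A σ (cpF_nonempty_of_cyc hrow2 hσ hc) hrow2 hopp hσ⟩
    · intro σ hmem
      have hσ := (Finset.mem_filter.1 hmem).2.1
      have hc := (Finset.mem_filter.1 hmem).2.2
      exact iota_iota A σ (cpF_nonempty_of_cyc hrow2 hσ hc) hrow2 hopp hσ
  have hsplit : ∀ σ : Equiv.Perm n, W σ =
      (if (∀ i, A i (σ i) ≠ 0) ∧ Cyc σ then W σ else 0) +
      (if (∀ i, A i (σ i) ≠ 0) ∧ ¬ Cyc σ then W σ else 0) := by
    intro σ
    by_cases h1 : ∀ i, A i (σ i) ≠ 0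
    · by_cases h2 : Cyc σ <;> simp [h1, h2]
    · simp [h1, hW0 σ h1]
  have hind : ∀ σ : Equiv.Perm n,
      Set.indicator {σ : Equiv.Perm n | (∀ i : n, A i (σ i) ≠ 0) ∧ ¬ Cyc σ} W σ
        = if (∀ i, A i (σ i) ≠ 0) ∧ ¬ Cyc σ then W σ else 0 := by
    intro σ
    rw [Set.indicator_apply]
    congr 1
  calc A.det = ∑ σ : Equiv.Perm n, W σ := hdet
    _ = ∑ σ : Equiv.Perm n, ((if (∀ i, A i (σ i) ≠ 0) ∧ Cyc σ then W σ else 0) +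
          (if (∀ i, A i (σ i) ≠ 0) ∧ ¬ Cyc σ then W σ else 0)) :=
        Finset.sum_congr rfl fun σ _ => hsplit σ
    _ = (∑ σ : Equiv.Perm n, if (∀ i, A i (σ i) ≠ 0) ∧ Cyc σ then W σ else 0) +
          ∑ σ : Equiv.Perm n, if (∀ i, A i (σ i) ≠ 0) ∧ ¬ Cyc σ then W σ else 0 :=
        Finset.sum_add_distrib
    _ = 0 + ∑ σ : Equiv.Perm n, if (∀ i, A i (σ i) ≠ 0) ∧ ¬ Cyc σ then W σ else 0 := by
        rw [← Finset.sum_filter, hcyc0]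
    _ = ∑ σ : Equiv.Perm n, if (∀ i, A i (σ i) ≠ 0) ∧ ¬ Cyc σ then W σ else 0 := zero_add _
    _ = ∑ σ : Equiv.Perm n,
          Set.indicator {σ : Equiv.Perm n | (∀ i : n, A i (σ i) ≠ 0) ∧ ¬ Cyc σ} W σ :=
        (Finset.sum_congr rfl fun σ _ => hind σ).symm
end

section
/- Let E, F, D, f₀ be as in the setup. Then there exists a Pfaffian orientation relative to f₀, i.e. there exists y : E → ZMod 2 such that for every face f ≠ f₀, ∑ over {e : E | D e f ≠ 0} of ((if D e f = -1 then 1 else 0) + y e) = 1 in ZMod 2. (Every punctured, orientable, connected, cellulated surface admits a Pfaffian orientation.) -/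
open Finset

/-- Existence: every punctured, orientable, connected, cellulated surface admits a
Pfaffian orientation. -/
theorem exists_pfaffian_orientation
    (E F : Type*) [Fintype E] [Fintype F] [DecidableEq E] [DecidableEq F]
    (D : Matrix E F ℤ)
    (hD : ∀ e : E, ∃ f g : F, f ≠ g ∧ D e f = 1 ∧ D e g = -1 ∧
      ∀ h : F, h ≠ f → h ≠ g → D e h = 0)
    (hconn : (SimpleGraph.fromRel (fun f g : F => ∃ e : E, D e f ≠ 0 ∧ D e g ≠ 0)).Connected)
    (f₀ : F) :
    ∃ y : E → ZMod 2, ∀ f : F, f ≠ f₀ →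
      ∑ e ∈ Finset.univ.filter (fun e : E => D e f ≠ 0),
        ((if D e f = -1 then (1 : ZMod 2) else 0) + y e) = 1 := by
  classical
  set G := SimpleGraph.fromRel (fun f g : F => ∃ e : E, D e f ≠ 0 ∧ D e g ≠ 0) with hG
  -- boundary of a single edge indicator
  have edge_bd : ∀ (e : E) (a b : F), a ≠ b → D e a ≠ 0 → D e b ≠ 0 → ∀ g : F,
      (if D e g ≠ 0 then (1 : ZMod 2) else 0)
        = (if g = a then 1 else 0) + (if g = b then 1 else 0) := by
    intro e a b hab ha hb g
    obtain ⟨f1, g1, hfg, h1, h2, h0⟩ := hD e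
    have hDg : ∀ x : F, D e x ≠ 0 → x = f1 ∨ x = g1 := by
      intro x hx
      by_contra hc
      push_neg at hc
      exact hx (h0 x hc.1 hc.2)
    by_cases hga : g = a
    · subst hga
      simp [ha, hab]
    · by_cases hgb : g = b
      · subst hgb
        simp [hb, hga]
      · have hz : D e g = 0 := by
          by_contra hc
          rcases hDg g hc with rfl | rfl <;>
            rcases hDg a ha with rfl | rfl <;>
            rcases hDg b hb with h' | h' <;> simp_all
        simp [hz, hga, hgb]
  -- boundary of a chain along a walk
  have key : ∀ (a b : F) (w : G.Walk a b), ∃ p : E → ZMod 2, ∀ g : F,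
      (∑ e ∈ univ.filter (fun e : E => D e g ≠ 0), p e)
        = (if g = a then 1 else 0) + (if g = b then 1 else 0) := by
    intro a b w
    induction w with
    | nil =>
      rename_i u
      refine ⟨0, fun g => ?_⟩
      by_cases h : g = u
      · simp only [Pi.zero_apply, Finset.sum_const_zero, h, if_pos rfl]
        decide
      · simp [h]
    | @cons u v b' h w ih =>
      obtain ⟨p, hp⟩ := ih
      have h' := h
      rw [hG, SimpleGraph.fromRel_adj] at h'
      obtain ⟨hne, hrel⟩ := h'
      have hedge : ∃ e : E, D e u ≠ 0 ∧ D e v ≠ 0 := by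
        rcases hrel with ⟨e, h1, h2⟩ | ⟨e, h1, h2⟩
        · exact ⟨e, h1, h2⟩
        · exact ⟨e, h2, h1⟩
      obtain ⟨e, hu, hv⟩ := hedge
      refine ⟨p + fun e' => if e' = e then 1 else 0, fun g => ?_⟩
      have hsum : (∑ e' ∈ univ.filter (fun e' : E => D e' g ≠ 0),
          (if e' = e then (1 : ZMod 2) else 0)) = if D e g ≠ 0 then 1 else 0 := by
        rw [Finset.sum_ite_eq' (univ.filter (fun e' : E => D e' g ≠ 0)) e (fun _ => (1 : ZMod 2))]
        simp
      simp only [Pi.add_apply, Finset.sum_add_distrib, hp g, hsum,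
        edge_bd e u v hne hu hv g]
      have hz : ∀ x y z : ZMod 2, (y + z) + (x + y) = x + z := by decide
      exact hz _ _ _
  have key2 : ∀ f : F, ∃ p : E → ZMod 2, ∀ g : F,
      (∑ e ∈ univ.filter (fun e : E => D e g ≠ 0), p e)
        = (if g = f then 1 else 0) + (if g = f₀ then 1 else 0) := by
    intro f
    obtain ⟨w⟩ := hconn.preconnected f f₀
    exact key f f₀ w
  choose p hp using key2
  set c : F → ZMod 2 := fun f =>
    if f = f₀ then 0 else
      1 + ∑ e ∈ univ.filter (fun e : E => D e f ≠ 0), (if D e f = -1 then (1 : ZMod 2) else 0)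
    with hc
  refine ⟨fun e => ∑ f, c f * p f e, fun f hf => ?_⟩
  rw [Finset.sum_add_distrib]
  have hy : (∑ e ∈ univ.filter (fun e : E => D e f ≠ 0), ∑ g, c g * p g e) = c f := by
    rw [Finset.sum_comm]
    have hterm : ∀ g : F, (∑ e ∈ univ.filter (fun e : E => D e f ≠ 0), c g * p g e)
        = c g * (if f = g then 1 else 0) := by
      intro g
      rw [← Finset.mul_sum, hp g f]
      simp [hf]
    simp only [hterm]
    simp [Finset.sum_ite_eq]
  rw [hy, hc]
  simp only [if_neg hf]
  have hz : ∀ x : ZMod 2, x + (1 + x) = 1 := by decide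
  exact hz _
end

section
/- Let E, F, D be as in the setup. Then for any two faces f₀ f₁ : F, the set of Pfaffian orientations relative to f₀ and the set of Pfaffian orientations relative to f₁ have the same cardinality. (The number of Pfaffian orientations on a punctured orientable cellulated surface does not depend on which face is removed.) -/
open Finset

section aux
variable {E F : Type*} [Fintype E] [Fintype F] [DecidableEq E] [DecidableEq F]

private def Ssum (D : Matrix E F ℤ) (f : F) (y : E → ZMod 2) : ZMod 2 :=
  ∑ e ∈ Finset.univ.filter (fun e : E => D e f ≠ 0),
    ((if D e f = -1 then (1 : ZMod 2) else 0) + y e)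

private lemma Ssum_total (D : Matrix E F ℤ)
    (hD : ∀ e : E, ∃ f g : F, f ≠ g ∧ D e f = 1 ∧ D e g = -1 ∧
      ∀ h : F, h ≠ f → h ≠ g → D e h = 0) (y : E → ZMod 2) :
    ∑ f, Ssum D f y = (Fintype.card E : ZMod 2) := by
  have h1 : ∀ f, Ssum D f y
      = ∑ e : E, (if D e f ≠ 0 then ((if D e f = -1 then (1 : ZMod 2) else 0) + y e) else 0) := by
    intro f; rw [Ssum, Finset.sum_filter]
  simp_rw [h1]
  rw [Finset.sum_comm]
  have h2 : ∀ e : E, (∑ f : F, if D e f ≠ 0 then ((if D e f = -1 then (1:ZMod 2) else 0) + y e) else 0) = 1 := by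
    intro e
    obtain ⟨f, g, hfg, hf, hg, hoth⟩ := hD e
    rw [← Finset.sum_subset (Finset.subset_univ ({f, g} : Finset F))
      (by intro h _ hh
          simp only [Finset.mem_insert, Finset.mem_singleton, not_or] at hh
          simp [hoth h hh.1 hh.2])]
    rw [Finset.sum_pair hfg]
    simp [hf, hg]
    have h2x : ∀ x : ZMod 2, x + (1 + x) = 1 := by decide
    exact h2x _
  simp_rw [h2]
  simp [Finset.card_univ]

private lemma Ssum_add (D : Matrix E F ℤ) (f : F) (y δ : E → ZMod 2) :
    Ssum D f (fun e => y e + δ e)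
      = Ssum D f y + ∑ e ∈ Finset.univ.filter (fun e : E => D e f ≠ 0), δ e := by
  rw [Ssum, Ssum, ← Finset.sum_add_distrib]
  congr 1; funext e; ring

private lemma exists_delta (D : Matrix E F ℤ)
    (hD : ∀ e : E, ∃ f g : F, f ≠ g ∧ D e f = 1 ∧ D e g = -1 ∧
      ∀ h : F, h ≠ f → h ≠ g → D e h = 0)
    (f₀ f₁ : F)
    (w : (SimpleGraph.fromRel (fun f g : F => ∃ e : E, D e f ≠ 0 ∧ D e g ≠ 0)).Walk f₀ f₁) :
    ∃ δ : E → ZMod 2, ∀ f : F,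
      ∑ e ∈ Finset.univ.filter (fun e : E => D e f ≠ 0), δ e
        = (if f = f₀ then 1 else 0) + (if f = f₁ then 1 else 0) := by
  induction w with
  | @nil a =>
    refine ⟨0, fun f => ?_⟩
    by_cases h : f = a <;> simp [h]
    decide
  | @cons a b c hadj p ih =>
    obtain ⟨δ, hδ⟩ := ih
    rw [SimpleGraph.fromRel_adj] at hadj
    obtain ⟨hab, he⟩ := hadj
    have he' : ∃ e : E, D e a ≠ 0 ∧ D e b ≠ 0 := by
      rcases he with ⟨e, h1, h2⟩ | ⟨e, h1, h2⟩
      · exact ⟨e, h1, h2⟩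
      · exact ⟨e, h2, h1⟩
    obtain ⟨e, hea, heb⟩ := he'
    refine ⟨fun e' => δ e' + (if e' = e then 1 else 0), fun f => ?_⟩
    rw [Finset.sum_add_distrib, hδ]
    have hsum : (∑ e' ∈ Finset.univ.filter (fun e' : E => D e' f ≠ 0),
        (if e' = e then (1:ZMod 2) else 0)) = if D e f ≠ 0 then 1 else 0 := by
      rw [Finset.sum_ite_eq']
      simp [Finset.mem_filter]
    rw [hsum]
    obtain ⟨u, v, huv, hu, hv, hoth⟩ := hD e
    have hmem : ∀ x : F, D e x ≠ 0 ↔ (x = a ∨ x = b) := by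
      intro x
      constructor
      · intro hx
        have hxa : x = u ∨ x = v := by
          by_contra hc; push_neg at hc; exact hx (hoth x hc.1 hc.2)
        have haa : a = u ∨ a = v := by
          by_contra hc; push_neg at hc; exact hea (hoth a hc.1 hc.2)
        have hbb : b = u ∨ b = v := by
          by_contra hc; push_neg at hc; exact heb (hoth b hc.1 hc.2)
        rcases haa with h | h <;> rcases hbb with h' | h' <;> rcases hxa with h'' | h'' <;>
          subst_vars <;> tauto
      · rintro (rfl | rfl)
        · exact hea
        · exact heb
    have hDe : (if D e f ≠ 0 then (1:ZMod 2) else 0)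
        = (if f = a then 1 else 0) + (if f = b then 1 else 0) := by
      by_cases h1 : f = a <;> by_cases h2 : f = b
      · exact absurd (h1 ▸ h2 : a = b) hab
      all_goals simp [hmem, h1, h2]
      · exact hab
      · exact hab.symm
    rw [hDe]
    by_cases h1 : f = a <;> by_cases h2 : f = b <;> by_cases h3 : f = c <;>
      simp [h1, h2, h3] <;> first | decide | (subst_vars; simp_all) <;> decide
end aux

/-- The number of Pfaffian orientations does not depend on which face is punctured. -/
theorem pfaffian_count_independent_of_puncture
    (E F : Type*) [Fintype E] [Fintype F] [DecidableEq E] [DecidableEq F]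
    (D : Matrix E F ℤ)
    (hD : ∀ e : E, ∃ f g : F, f ≠ g ∧ D e f = 1 ∧ D e g = -1 ∧
      ∀ h : F, h ≠ f → h ≠ g → D e h = 0)
    (hconn : (SimpleGraph.fromRel (fun f g : F => ∃ e : E, D e f ≠ 0 ∧ D e g ≠ 0)).Connected)
    (f₀ f₁ : F) :
    Nat.card {y : E → ZMod 2 | ∀ f : F, f ≠ f₀ →
        ∑ e ∈ Finset.univ.filter (fun e : E => D e f ≠ 0),
          ((if D e f = -1 then (1 : ZMod 2) else 0) + y e) = 1} =
    Nat.card {y : E → ZMod 2 | ∀ f : F, f ≠ f₁ →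
        ∑ e ∈ Finset.univ.filter (fun e : E => D e f ≠ 0),
          ((if D e f = -1 then (1 : ZMod 2) else 0) + y e) = 1} := by
  classical
  show Nat.card {y : E → ZMod 2 | ∀ f : F, f ≠ f₀ → Ssum D f y = 1} =
    Nat.card {y : E → ZMod 2 | ∀ f : F, f ≠ f₁ → Ssum D f y = 1}
  set c : ZMod 2 := (Fintype.card E : ZMod 2) - ((Fintype.card F - 1 : ℕ) : ZMod 2) with hc
  have hpunct : ∀ (g : F) (y : E → ZMod 2), (∀ f : F, f ≠ g → Ssum D f y = 1) →
      Ssum D g y = c := by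
    intro g y hy
    have htot := Ssum_total D hD y
    rw [← Finset.add_sum_erase Finset.univ _ (Finset.mem_univ g)] at htot
    have hrest : ∑ f ∈ Finset.univ.erase g, Ssum D f y = ((Fintype.card F - 1 : ℕ) : ZMod 2) := by
      rw [Finset.sum_congr rfl (fun f hf => hy f (Finset.mem_erase.mp hf).1)]
      simp [Finset.card_erase_of_mem, Finset.card_univ]
    rw [hrest] at htot
    rw [hc]
    exact eq_sub_of_add_eq htot
  have hzo : ∀ x : ZMod 2, x = 0 ∨ x = 1 := by decide
  rcases hzo c with h0 | h1
  · -- c = 0 : bijection by adding δ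
    obtain ⟨δ, hδ⟩ := exists_delta D hD f₀ f₁ (hconn.preconnected f₀ f₁).some
    have hδ' : ∀ f : F, ∑ e ∈ Finset.univ.filter (fun e : E => D e f ≠ 0), δ e
        = (if f = f₁ then 1 else 0) + (if f = f₀ then 1 else 0) := by
      intro f; rw [hδ f, add_comm]
    have key : ∀ (a b : F),
        (∀ f : F, ∑ e ∈ Finset.univ.filter (fun e : E => D e f ≠ 0), δ e
          = (if f = a then 1 else 0) + (if f = b then 1 else 0)) →
        ∀ y : E → ZMod 2, (∀ f : F, f ≠ a → Ssum D f y = 1) →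
        ∀ f : F, f ≠ b → Ssum D f (fun e => y e + δ e) = 1 := by
      intro a b hd y hy f hfb
      rw [Ssum_add, hd f]
      by_cases hfa : f = a
      · subst hfa
        rw [hpunct _ _ hy, h0, if_pos rfl, if_neg hfb]
        decide
      · rw [hy f hfa, if_neg hfa, if_neg hfb]
        decide
    have hinv : ∀ y : E → ZMod 2, (fun e => (y e + δ e) + δ e) = y := by
      intro y; funext e
      have : ∀ u v : ZMod 2, u + v + v = u := by decide
      exact this _ _
    apply Nat.card_congr
    exact
      { toFun := fun y => ⟨fun e => y.1 e + δ e, key f₀ f₁ hδ y.1 y.2⟩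
        invFun := fun y => ⟨fun e => y.1 e + δ e, key f₁ f₀ hδ' y.1 y.2⟩
        left_inv := fun y => Subtype.ext (hinv y.1)
        right_inv := fun y => Subtype.ext (hinv y.1) }
  · -- c = 1 : the sets coincide
    have hEq : ∀ (a b : F) (y : E → ZMod 2), (∀ f : F, f ≠ a → Ssum D f y = 1) →
        ∀ f : F, f ≠ b → Ssum D f y = 1 := by
      intro a b y hy f _
      by_cases hfa : f = a
      · subst hfa; rw [hpunct _ _ hy, h1]
      · exact hy f hfa
    have hsets : {y : E → ZMod 2 | ∀ f : F, f ≠ f₀ → Ssum D f y = 1}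
        = {y : E → ZMod 2 | ∀ f : F, f ≠ f₁ → Ssum D f y = 1} :=
      Set.ext fun y => ⟨fun h => hEq f₀ f₁ y h, fun h => hEq f₁ f₀ y h⟩
    rw [hsets]
end
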